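/- arXiv:math/0105135 — 10 statements merged into one kernel-verified Lean document; each statement's English description precedes it below -/
import Mathlib

section
/- Let λ be an infinite cardinal and let D be a regular ultrafilter on λ that admits a (λ,D)-coherent system. Let 𝓛 be a language of cardinality ≤ λ and let M be a nonempty 𝓛-structure. Then the ultrapower M^λ/D is λ⁺⁺-universal: every 𝓛-structure M′ of cardinality ≤ λ⁺ that is elementarily equivalent to M admits an elementary embedding into the ultrapower M^λ/D (the quotient of the functions λ → M by the relation f ~ g iff {i < λ : f(i) = g(i)} ∈ D, equipped with the induced 𝓛-structure as in Łoś's theorem). -/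
open FirstOrder Cardinal Set
open FirstOrder.Language
open scoped Classical

noncomputable section

/-- A filter `D` on (the ordinals below) `lam` is *regular* if there is a family
`(A α)_{α < lam}` of members of `D` such that every `i < lam` belongs to `A α`
for only finitely many `α`. -/
def IsRegularFilter (lam : Cardinal.{0}) (D : Filter lam.ord.ToType) : Prop :=
  ∃ A : lam.ord.ToType → Set lam.ord.ToType,
    (∀ α, A α ∈ D) ∧ ∀ i, {α | i ∈ A α}.Finite

/-- A `(lam, D)`-coherent system: finite sets `u ζ i ⊆ ζ` (for `ζ < lam⁺`, `i < lam`)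
and natural numbers `n i` such that `|u ζ i| < n i`, every finite `B ⊆ ζ` satisfies
`{i | B ⊆ u ζ i} ∈ D`, and the system is coherent: `γ ∈ u ζ i → u γ i = u ζ i ∩ γ`. -/
structure CoherentSystem (lam : Cardinal.{0}) (D : Filter lam.ord.ToType) where
  u : (Order.succ lam).ord.ToType → lam.ord.ToType → Finset (Order.succ lam).ord.ToType
  n : lam.ord.ToType → ℕ
  card_lt : ∀ ζ i, (u ζ i).card < n i
  mem_lt : ∀ ζ i, ∀ γ ∈ u ζ i, γ < ζ
  mem_filter : ∀ (B : Finset (Order.succ lam).ord.ToType) (ζ : (Order.succ lam).ord.ToType),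
    (∀ β ∈ B, β < ζ) → {i | B ⊆ u ζ i} ∈ D
  coherent : ∀ ζ i, ∀ γ ∈ u ζ i, u γ i = {x ∈ u ζ i | x < γ}

namespace UPUniv


variable {L : FirstOrder.Language.{0,0}} {M M' : Type} [L.Structure M] [L.Structure M']

/-- finite conjunction -/
def conjAll {α : Type} : List (L.Formula α) → L.Formula α
  | [] => ⊤
  | ψ :: l => ψ ⊓ conjAll l

@[simp] theorem realize_conjAll {α : Type} (l : List (L.Formula α)) (v : α → M) :
    (conjAll l).Realize v ↔ ∀ ψ ∈ l, ψ.Realize v := by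
  induction l with
  | nil => simp [conjAll]
  | cons ψ l ih => simp [conjAll, Formula.realize_inf, ih]

/-- existential quantification over the last variable of a formula on `Fin (m+1)` -/
def exLast {m : ℕ} (ψ : L.Formula (Fin (m + 1))) : L.Formula (Fin m) :=
  (BoundedFormula.relabel
    (fun j : Fin (m + 1) =>
      (Fin.lastCases (Sum.inr (0 : Fin 1)) (fun j => Sum.inl j) j : Fin m ⊕ Fin 1)) ψ).ex

theorem realize_exLast {m : ℕ} (ψ : L.Formula (Fin (m + 1))) (c : Fin m → M) :
    (exLast ψ).Realize c ↔ ∃ b : M, ψ.Realize (Fin.snoc c b) := by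
  rw [exLast, Formula.Realize, BoundedFormula.realize_ex]
  refine exists_congr fun b => ?_
  rw [BoundedFormula.realize_relabel]
  have h1 : ((Fin.snoc (default : Fin 0 → M) b : Fin 1 → M) ∘ Fin.natAdd 1)
      = (default : Fin 0 → M) := by funext j; exact j.elim0
  rw [h1, Formula.Realize]
  congr! 1
  funext j
  refine Fin.lastCases ?_ (fun j' => ?_) j
  · simp [Fin.lastCases_last, Fin.snoc]
  · simp [Fin.lastCases_castSucc, Fin.snoc_castSucc]

variable (F : Finset (Σ k, L.Formula (Fin k)))

/-- index type for atomic matching conditions -/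
def Idx (m : ℕ) : Type := Σ s : {x // x ∈ F}, (Fin s.1.1 → Fin m)

instance (m : ℕ) : Fintype (Idx F m) := by unfold Idx; infer_instance

/-- the base formulas: members of `F` with variables substituted -/
def baseF (m : ℕ) (p : Idx F m) : L.Formula (Fin m) := (p.1.1.2).relabel p.2

def theta0Fun (m : ℕ) (b : Idx F m → Prop) : L.Formula (Fin m) :=
  conjAll ((Finset.univ : Finset (Idx F m)).toList.map
    (fun p => if b p then baseF F m p else (baseF F m p).not))

/-- the atomic-matching formula of the tuple `a` -/
def theta0 (m : ℕ) (a : Fin m → M') : L.Formula (Fin m) :=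
  theta0Fun F m (fun p => (p.1.1.2).Realize (a ∘ p.2))

theorem theta0_range_finite (m : ℕ) :
    (Set.range (theta0 (M' := M') F m)).Finite := by
  apply (Set.finite_range (theta0Fun F m)).subset
  rintro _ ⟨x, rfl⟩
  exact ⟨_, rfl⟩

def extFormula {m : ℕ} (θ : L.Formula (Fin m)) (s : Finset (L.Formula (Fin (m + 1)))) :
    L.Formula (Fin m) :=
  θ ⊓ conjAll ((s.image exLast).toList)

/-- the depth-`d` forward type of a tuple in `M'`, together with finiteness of range -/
def thetaAux : ∀ _ : ℕ,
    Σ' t : ∀ m : ℕ, (Fin m → M') → L.Formula (Fin m), ∀ m, (Set.range (t m)).Finite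
  | 0 => ⟨fun m a => theta0 F m a, fun m => theta0_range_finite F m⟩
  | (d + 1) =>
    let T := thetaAux d
    ⟨fun m a => extFormula (theta0 F m a)
        (((T.2 (m + 1)).subset (by
          rintro _ ⟨a', rfl⟩
          exact ⟨_, rfl⟩ : Set.range (fun a' : M' => T.1 (m + 1) (Fin.snoc a a')) ⊆
            Set.range (T.1 (m + 1)))).toFinset),
      by
        intro m
        have h2 : {s : Finset (L.Formula (Fin (m + 1))) |
            ↑s ⊆ Set.range (T.1 (m + 1))}.Finite :=
          Set.Finite.preimage Finset.coe_injective.injOn ((T.2 (m + 1)).finite_subsets)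
        apply (Set.Finite.image2 extFormula (theta0_range_finite (M' := M') F m) h2).subset
        rintro _ ⟨a, rfl⟩
        exact Set.mem_image2_of_mem ⟨a, rfl⟩ (by
          simp only [Set.mem_setOf_eq, Set.Finite.coe_toFinset]
          rintro _ ⟨a', rfl⟩; exact ⟨_, rfl⟩)⟩

def theta (d m : ℕ) (a : Fin m → M') : L.Formula (Fin m) := (thetaAux F d).1 m a

theorem theta_zero (m : ℕ) (a : Fin m → M') : theta F 0 m a = theta0 F m a := rfl

theorem theta_succ (d m : ℕ) (a : Fin m → M') :
    ∃ s : Finset (L.Formula (Fin (m + 1))),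
      (∀ ψ, ψ ∈ s ↔ ∃ a' : M', ψ = theta F d (m + 1) (Fin.snoc a a')) ∧
      theta F (d + 1) m a = extFormula (theta0 F m a) s := by
  refine ⟨_, fun ψ => ?_, rfl⟩
  rw [Set.Finite.mem_toFinset]
  constructor
  · rintro ⟨a', rfl⟩; exact ⟨a', rfl⟩
  · rintro ⟨a', rfl⟩; exact ⟨a', rfl⟩
theorem realize_extFormula {X : Type} [L.Structure X] {m : ℕ} {θ : L.Formula (Fin m)}
    {s : Finset (L.Formula (Fin (m + 1)))} {c : Fin m → X} :
    (extFormula θ s).Realize c ↔ θ.Realize c ∧ ∀ ψ ∈ s, (exLast ψ).Realize c := by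
  simp only [extFormula, Formula.realize_inf, realize_conjAll, Finset.mem_toList,
    Finset.mem_image]
  constructor
  · rintro ⟨h1, h2⟩
    exact ⟨h1, fun ψ hψ => h2 _ ⟨ψ, hψ, rfl⟩⟩
  · rintro ⟨h1, h2⟩
    exact ⟨h1, by rintro _ ⟨ψ, hψ, rfl⟩; exact h2 ψ hψ⟩

theorem realize_theta0_iff {X : Type} [L.Structure X] {m : ℕ} {a : Fin m → M'} {c : Fin m → X} :
    (theta0 F m a).Realize c ↔ ∀ p : Idx F m,
      ((p.1.1.2).Realize (c ∘ p.2) ↔ (p.1.1.2).Realize (a ∘ p.2)) := by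
  simp only [theta0, theta0Fun, realize_conjAll, List.mem_map, Finset.mem_toList,
    Finset.mem_univ, true_and]
  constructor
  · intro h p
    have hh := h _ ⟨p, rfl⟩
    by_cases hp : (p.1.1.2).Realize (a ∘ p.2)
    · rw [if_pos hp] at hh
      rw [baseF, Formula.realize_relabel] at hh
      exact ⟨fun _ => hp, fun _ => hh⟩
    · rw [if_neg hp] at hh
      rw [Formula.realize_not, baseF, Formula.realize_relabel] at hh
      exact ⟨fun hc => absurd hc hh, fun ha => absurd ha hp⟩
  · rintro h _ ⟨p, rfl⟩
    by_cases hp : (p.1.1.2).Realize (a ∘ p.2)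
    · rw [if_pos hp, baseF, Formula.realize_relabel]
      exact (h p).2 hp
    · rw [if_neg hp, Formula.realize_not, baseF, Formula.realize_relabel]
      exact fun hc => hp ((h p).1 hc)

theorem theta_realize_theta0 {X : Type} [L.Structure X] {d m : ℕ} {a : Fin m → M'}
    {c : Fin m → X} (h : (theta F d m a).Realize c) : (theta0 F m a).Realize c := by
  cases d with
  | zero => rwa [theta_zero] at h
  | succ d =>
    obtain ⟨s, _, heq⟩ := theta_succ F d m a
    rw [heq, realize_extFormula] at h
    exact h.1

theorem theta_base {d m : ℕ} {a : Fin m → M'} {c : Fin m → M}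
    (h : (theta F d m a).Realize c) :
    ∀ s : Σ k, L.Formula (Fin k), ∀ hs : s ∈ F, ∀ σ : Fin s.1 → Fin m,
      ((s.2).Realize (c ∘ σ) ↔ (s.2).Realize (a ∘ σ)) := by
  intro s hs σ
  exact (realize_theta0_iff F).1 (theta_realize_theta0 F h) ⟨⟨s, hs⟩, σ⟩

theorem theta_self : ∀ d m : ℕ, ∀ a : Fin m → M', (theta F d m a).Realize a := by
  intro d
  induction d with
  | zero =>
    intro m a
    rw [theta_zero, realize_theta0_iff]
    exact fun _ => Iff.rfl
  | succ d ih =>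
    intro m a
    obtain ⟨s, hs, heq⟩ := theta_succ F d m a
    rw [heq, realize_extFormula]
    refine ⟨by rw [realize_theta0_iff]; exact fun _ => Iff.rfl, fun ψ hψ => ?_⟩
    obtain ⟨a', rfl⟩ := (hs ψ).1 hψ
    rw [realize_exLast]
    exact ⟨a', ih _ _⟩

theorem theta_ext {d m : ℕ} {a : Fin m → M'} {c : Fin m → M}
    (h : (theta F (d + 1) m a).Realize c) (a' : M') :
    ∃ b : M, (theta F d (m + 1) (Fin.snoc a a')).Realize (Fin.snoc c b) := by
  obtain ⟨s, hs, heq⟩ := theta_succ F d m a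
  rw [heq, realize_extFormula] at h
  have h2 := h.2 _ ((hs _).2 ⟨a', rfl⟩)
  rwa [realize_exLast] at h2
/-- the increasing enumeration of a finite set, composed with `g` -/
def tup {α X : Type} [LinearOrder α] (s : Finset α) {k : ℕ} (h : s.card = k) (g : α → X) :
    Fin k → X := fun p => g (s.orderEmbOfFin h p)

theorem tup_congr {α X : Type} [LinearOrder α] {s t : Finset α} (hst : s = t) {k : ℕ}
    (hs : s.card = k) (ht : t.card = k) (g : α → X) : tup s hs g = tup t ht g := by
  subst hst; rfl

theorem exists_orderEmbOfFin_eq {α : Type} [LinearOrder α] {s : Finset α} {k : ℕ}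
    (h : s.card = k) {x : α} (hx : x ∈ s) : ∃ p, s.orderEmbOfFin h p = x := by
  have hr := Finset.range_orderEmbOfFin s h
  have : x ∈ Set.range (s.orderEmbOfFin h) := by rw [hr]; exact hx
  exact this

theorem tup_insert {α X : Type} [LinearOrder α] {s : Finset α} {k : ℕ} (hs : s.card = k)
    {ζ : α} (hζ : ∀ x ∈ s, x < ζ) (hins : (insert ζ s).card = k + 1) (g : α → X) :
    tup (insert ζ s) hins g = Fin.snoc (tup s hs g) (g ζ) := by
  have hemb : (fun p : Fin (k + 1) =>
      (Fin.lastCases ζ (fun q => s.orderEmbOfFin hs q) p : α)) =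
      (insert ζ s).orderEmbOfFin hins := by
    apply Finset.orderEmbOfFin_unique
    · intro p
      refine Fin.lastCases ?_ (fun q => ?_) p
      · simp [Finset.mem_insert]
      · simp only [Fin.lastCases_castSucc]
        exact Finset.mem_insert_of_mem (Finset.orderEmbOfFin_mem s hs q)
    · intro p q hpq
      induction q using Fin.lastCases with
      | last =>
        have hp : p ≠ Fin.last k := ne_of_lt hpq
        obtain ⟨p', rfl⟩ := Fin.exists_castSucc_eq.2 hp
        simp only [Fin.lastCases_castSucc, Fin.lastCases_last]
        exact hζ _ (Finset.orderEmbOfFin_mem s hs p')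
      | cast q' =>
        have hp : p ≠ Fin.last k := by
          intro hh
          exact absurd (hh ▸ hpq) (not_lt.2 (Fin.le_last _))
        obtain ⟨p', rfl⟩ := Fin.exists_castSucc_eq.2 hp
        simp only [Fin.lastCases_castSucc]
        exact (s.orderEmbOfFin hs).strictMono (Fin.castSucc_lt_castSucc_iff.1 hpq)
  funext p
  have : tup (insert ζ s) hins g p = g (Fin.lastCases ζ (fun q => s.orderEmbOfFin hs q) p) := by
    rw [tup, ← hemb]
  rw [this]
  refine Fin.lastCases ?_ (fun q => ?_) p
  · simp only [Fin.lastCases_last, Fin.snoc_last]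
  · simp only [Fin.lastCases_castSucc, Fin.snoc_castSucc]; rfl

theorem theta_zero_transfer (hequiv : M' ≅[L] M) (d : ℕ) (a0 : Fin 0 → M') (c0 : Fin 0 → M) :
    (theta F d 0 a0).Realize c0 := by
  have h1 : (theta F d 0 a0).Realize a0 := theta_self F d 0 a0
  set ψ := theta F d 0 a0 with hψ
  have h2 : M' ⊨ (ψ.relabel (fun j : Fin 0 => (j.elim0 : Empty))) := by
    rw [Sentence.Realize, Formula.realize_relabel]
    convert h1 using 2
  have h3 := (hequiv.realize_sentence _).1 h2
  rw [Sentence.Realize, Formula.realize_relabel] at h3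
  convert h3 using 2
/-! ### The recursive construction -/

section Rec

variable {lam : Cardinal.{0}} {D : Filter lam.ord.ToType}

theorem _root_.CoherentSystem.not_mem_self (S : _root_.CoherentSystem lam D)
    (ζ : (Order.succ lam).ord.ToType) (i : lam.ord.ToType) : ζ ∉ S.u ζ i :=
  fun h => lt_irrefl ζ (S.mem_lt ζ i ζ h)

theorem _root_.CoherentSystem.card_insert (S : _root_.CoherentSystem lam D)
    (ζ : (Order.succ lam).ord.ToType) (i : lam.ord.ToType) :
    (insert ζ (S.u ζ i)).card = (S.u ζ i).card + 1 :=
  Finset.card_insert_of_notMem (S.not_mem_self ζ i)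

variable [Nonempty M] (S : _root_.CoherentSystem lam D)
  (a : (Order.succ lam).ord.ToType → M')
  (Fi : lam.ord.ToType → Finset (Σ k : ℕ, L.Formula (Fin k)))

/-- one step of the recursion: choose a witness in `M` -/
def recAux (ζ : (Order.succ lam).ord.ToType)
    (g : ∀ ξ : (Order.succ lam).ord.ToType, ξ < ζ → lam.ord.ToType → M)
    (i : lam.ord.ToType) : M :=
  Classical.epsilon fun b : M =>
    (theta (Fi i) (S.n i - ((S.u ζ i).card + 1)) ((S.u ζ i).card + 1)
      (tup (insert ζ (S.u ζ i)) (S.card_insert ζ i) a)).Realize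
      (Fin.snoc (fun p => g ((S.u ζ i).orderEmbOfFin rfl p)
        (S.mem_lt ζ i _ (Finset.orderEmbOfFin_mem _ rfl p)) i) b)

/-- the functions `f ζ : lam → M` defined by transfinite recursion -/
def recFun : (Order.succ lam).ord.ToType → lam.ord.ToType → M :=
  (IsWellFounded.wf (α := (Order.succ lam).ord.ToType) (r := (· < ·))).fix
    (recAux S a Fi)

theorem recFun_eq (ζ : (Order.succ lam).ord.ToType) :
    recFun (M := M) S a Fi ζ = recAux S a Fi ζ (fun ξ _ => recFun S a Fi ξ) :=
  WellFounded.fix_eq _ _ _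

theorem realize_theta_of_card_zero (F : Finset (Σ k : ℕ, L.Formula (Fin k)))
    (hequiv : M' ≅[L] M) {k : ℕ} (hk : k = 0) (d : ℕ) (a' : Fin k → M') (c : Fin k → M) :
    (theta F d k a').Realize c := by
  subst hk
  exact theta_zero_transfer F hequiv d a' c

theorem recFun_inv (hequiv : M' ≅[L] M) :
    ∀ ζ : (Order.succ lam).ord.ToType, ∀ (i : lam.ord.ToType) (k : ℕ)
      (hk : (insert ζ (S.u ζ i)).card = k),
      (theta (Fi i) (S.n i - k) k (tup (insert ζ (S.u ζ i)) hk a)).Realize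
        (tup (insert ζ (S.u ζ i)) hk (fun ξ => recFun (M := M) S a Fi ξ i)) := by
  intro ζ0
  refine WellFounded.induction
    (C := fun ζ => ∀ (i : lam.ord.ToType) (k : ℕ)
      (hk : (insert ζ (S.u ζ i)).card = k),
      (theta (Fi i) (S.n i - k) k (tup (insert ζ (S.u ζ i)) hk a)).Realize
        (tup (insert ζ (S.u ζ i)) hk (fun ξ => recFun (M := M) S a Fi ξ i)))
    (IsWellFounded.wf (α := (Order.succ lam).ord.ToType) (r := (· < ·))) ζ0 ?_
  intro ζ IH i k hk
  have hkm : k = (S.u ζ i).card + 1 := by rw [← hk, S.card_insert]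
  subst hkm
  have hpre : (theta (Fi i) (S.n i - (S.u ζ i).card) ((S.u ζ i).card)
      (tup (S.u ζ i) rfl a)).Realize
      (tup (S.u ζ i) rfl (fun ξ => recFun (M := M) S a Fi ξ i)) := by
    rcases Finset.eq_empty_or_nonempty (S.u ζ i) with hu | hu
    · exact realize_theta_of_card_zero _ hequiv (by rw [hu]; simp) _ _ _
    · have hγmem : (S.u ζ i).max' hu ∈ S.u ζ i := (S.u ζ i).max'_mem hu
      set γ := (S.u ζ i).max' hu with hγ
      have hγlt : γ < ζ := S.mem_lt ζ i γ hγmem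
      have herase : S.u γ i = (S.u ζ i).erase γ := by
        rw [S.coherent ζ i γ hγmem]
        ext x
        simp only [Finset.mem_filter, Finset.mem_erase]
        constructor
        · rintro ⟨hx, hlt⟩; exact ⟨ne_of_lt hlt, hx⟩
        · rintro ⟨hne, hx⟩
          exact ⟨hx, lt_of_le_of_ne ((S.u ζ i).le_max' x hx) hne⟩
      have hins2 : insert γ (S.u γ i) = S.u ζ i := by
        rw [herase]; exact Finset.insert_erase hγmem
      have hk2 : (insert γ (S.u γ i)).card = (S.u ζ i).card := by rw [hins2]
      have hIH := IH γ hγlt i ((S.u ζ i).card) hk2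
      rwa [tup_congr hins2 hk2 rfl a, tup_congr hins2 hk2 rfl _] at hIH
  have hbud : S.n i - (S.u ζ i).card = (S.n i - ((S.u ζ i).card + 1)) + 1 := by
    have := S.card_lt ζ i; omega
  rw [hbud] at hpre
  have hex := theta_ext (Fi i) hpre (a ζ)
  have htupa : tup (insert ζ (S.u ζ i)) (S.card_insert ζ i) a
      = Fin.snoc (tup (S.u ζ i) rfl a) (a ζ) :=
    tup_insert rfl (fun x hx => S.mem_lt ζ i x hx) _ a
  have htupf : tup (insert ζ (S.u ζ i)) hk (fun ξ => recFun (M := M) S a Fi ξ i)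
      = Fin.snoc (tup (S.u ζ i) rfl (fun ξ => recFun (M := M) S a Fi ξ i))
        (recFun (M := M) S a Fi ζ i) :=
    tup_insert rfl (fun x hx => S.mem_lt ζ i x hx) _ _
  rw [← htupa] at hex
  rw [htupf, recFun_eq]
  exact Classical.epsilon_spec hex

end Rec
/-! ### cardinality plumbing -/

theorem exists_surj {X Y : Type} [Nonempty X] (h : #X ≤ #Y) :
    ∃ g : Y → X, Function.Surjective g := by
  obtain ⟨emb⟩ := (Cardinal.le_def _ _).1 h
  exact ⟨Function.invFun emb, Function.invFun_surjective emb.injective⟩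

theorem mk_formulas_le {lam : Cardinal.{0}} (hlam : ℵ₀ ≤ lam) (hL : L.card ≤ lam) :
    #(Σ k : ℕ, L.Formula (Fin k)) ≤ lam := by
  rw [Cardinal.mk_sigma]
  have hpoint : ∀ k : ℕ, #(L.Formula (Fin k)) ≤ lam := by
    intro k
    have h1 : #(L.Formula (Fin k)) ≤ #(Σ n, L.BoundedFormula (Fin k) n) :=
      Cardinal.mk_le_of_injective (f := fun φ => (⟨0, φ⟩ : Σ n, L.BoundedFormula (Fin k) n))
        (fun φ ψ hh => by simpa using hh)
    have h2 := BoundedFormula.card_le (L := L) (α := Fin k)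
    have h3 : max ℵ₀ (Cardinal.lift.{0} #(Fin k) + Cardinal.lift.{0} L.card) ≤ lam := by
      rw [Cardinal.lift_id, Cardinal.lift_id]
      refine max_le hlam ?_
      have hk : #(Fin k) ≤ lam := le_trans (le_of_lt (Cardinal.lt_aleph0.2 ⟨k, Cardinal.mk_fin k⟩)) hlam
      calc #(Fin k) + L.card ≤ lam + lam := add_le_add hk hL
        _ = lam := Cardinal.add_eq_self hlam
    exact le_trans h1 (le_trans h2 h3)
  calc Cardinal.sum (fun k : ℕ => #(L.Formula (Fin k)))
      ≤ Cardinal.sum (fun _ : ℕ => lam) := Cardinal.sum_le_sum _ _ hpoint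
    _ = #ℕ * lam := Cardinal.sum_const' _ _
    _ = ℵ₀ * lam := by rw [Cardinal.mk_nat]
    _ = lam := Cardinal.mul_eq_right hlam hlam Cardinal.aleph0_ne_zero
end UPUniv

/-- If `D` is a regular ultrafilter on `lam` admitting a
`(lam,D)`-coherent system and `M` is a nonempty structure in a language of cardinality
`≤ lam`, then the ultrapower `M^lam/D` is `lam⁺⁺`-universal: every structure `M'` of
cardinality `≤ lam⁺` elementarily equivalent to `M` elementarily embeds into it. -/
theorem ultrapower_universal
    (lam : Cardinal.{0}) (hlam : ℵ₀ ≤ lam)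
    (D : Ultrafilter lam.ord.ToType)
    (hreg : IsRegularFilter lam (D : Filter lam.ord.ToType))
    (S : CoherentSystem lam (D : Filter lam.ord.ToType))
    (L : FirstOrder.Language.{0,0}) (hL : L.card ≤ lam)
    (M : Type) [L.Structure M] [Nonempty M]
    (M' : Type) [L.Structure M'] (hM'card : #M' ≤ Order.succ lam)
    (hequiv : M' ≅[L] M) :
    Nonempty (M' ↪ₑ[L] ((D : Filter lam.ord.ToType).Product fun _ => M)) := by
  classical
  obtain ⟨A, hA, hAfin⟩ := hreg
  -- M' is nonempty
  have hMne : Nonempty M' := by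
    have h1 : M ⊨ ((⊤ : L.BoundedFormula Empty 1).ex) := by
      rw [FirstOrder.Language.Sentence.Realize, FirstOrder.Language.Formula.Realize,
        FirstOrder.Language.BoundedFormula.realize_ex]
      obtain ⟨m⟩ := ‹Nonempty M›
      exact ⟨m, by rw [FirstOrder.Language.BoundedFormula.realize_top]; trivial⟩
    have h2 := (hequiv.realize_sentence _).2 h1
    rw [FirstOrder.Language.Sentence.Realize, FirstOrder.Language.Formula.Realize,
      FirstOrder.Language.BoundedFormula.realize_ex] at h2
    obtain ⟨m, _⟩ := h2
    exact ⟨m⟩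
  haveI := hMne
  -- surjective enumerations
  have hcard1 : #M' ≤ #((Order.succ lam).ord.ToType) := by
    rw [Cardinal.mk_toType, Cardinal.card_ord]; exact hM'card
  obtain ⟨a, ha⟩ := UPUniv.exists_surj hcard1
  haveI hFne : Nonempty (Σ k : ℕ, L.Formula (Fin k)) := ⟨⟨0, ⊤⟩⟩
  have hcard2 : #(Σ k : ℕ, L.Formula (Fin k)) ≤ #(lam.ord.ToType) := by
    rw [Cardinal.mk_toType, Cardinal.card_ord]; exact UPUniv.mk_formulas_le hlam hL
  obtain ⟨e, he⟩ := UPUniv.exists_surj hcard2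
  set Fi : lam.ord.ToType → Finset (Σ k : ℕ, L.Formula (Fin k)) :=
    fun i => ((hAfin i).toFinset).image e with hFi
  -- the key matching property
  have hmain : ∀ (nn : ℕ) (φ : L.Formula (Fin nn)) (x : Fin nn → M'),
      ∀ᶠ i in (D : Filter lam.ord.ToType),
        (φ.Realize (fun j => UPUniv.recFun (M := M) S a Fi (Classical.choose (ha (x j))) i)
          ↔ φ.Realize x) := by
    intro nn φ x
    obtain ⟨α₀, hα₀⟩ := he ⟨nn, φ⟩
    haveI : NoMaxOrder (Order.succ lam).ord.ToType :=
      Cardinal.noMaxOrder (le_trans hlam (Order.le_succ lam))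
    haveI hJne : Nonempty (Order.succ lam).ord.ToType := by
      apply Ordinal.toType_nonempty_iff_ne_zero.2
      intro h0
      have h1 := congrArg Ordinal.card h0
      rw [Cardinal.card_ord] at h1
      have h2 : (0 : Cardinal) < Order.succ lam :=
        lt_of_le_of_lt (zero_le (a := lam)) (Order.lt_succ lam)
      rw [h1] at h2
      simp at h2
    set B : Finset (Order.succ lam).ord.ToType :=
      Finset.image (fun j => Classical.choose (ha (x j))) Finset.univ with hB
    obtain ⟨ζs, hζs⟩ : ∃ ζs, ∀ β ∈ B, β < ζs := by
      rcases B.eq_empty_or_nonempty with hBe | hBn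
      · obtain ⟨z0⟩ := hJne
        exact ⟨z0, by rw [hBe]; intro β hβ; exact absurd hβ (Finset.notMem_empty β)⟩
      · obtain ⟨ζs, hgt⟩ := exists_gt (B.max' hBn)
        exact ⟨ζs, fun β hβ => lt_of_le_of_lt (B.le_max' β hβ) hgt⟩
    have hDset : {i : lam.ord.ToType | B ⊆ S.u ζs i} ∈ (D : Filter lam.ord.ToType) :=
      S.mem_filter B ζs hζs
    filter_upwards [hA α₀, hDset] with i hiA hiB
    have hmem : (⟨nn, φ⟩ : Σ k : ℕ, L.Formula (Fin k)) ∈ Fi i := by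
      rw [hFi]
      exact Finset.mem_image.2 ⟨α₀, (hAfin i).mem_toFinset.2 hiA, hα₀⟩
    have hinv := UPUniv.recFun_inv (M := M) S a Fi hequiv ζs i _ rfl
    have hbase := UPUniv.theta_base (Fi i) hinv ⟨nn, φ⟩ hmem
    have hexp : ∀ j : Fin nn, ∃ p, (insert ζs (S.u ζs i)).orderEmbOfFin rfl p
        = Classical.choose (ha (x j)) := by
      intro j
      refine UPUniv.exists_orderEmbOfFin_eq rfl (Finset.mem_insert_of_mem (hiB ?_))
      rw [hB]
      exact Finset.mem_image_of_mem _ (Finset.mem_univ j)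
    choose σ hσ using hexp
    have h1 : (UPUniv.tup (insert ζs (S.u ζs i)) rfl
        (fun ξ => UPUniv.recFun (M := M) S a Fi ξ i)) ∘ σ
        = fun j => UPUniv.recFun (M := M) S a Fi (Classical.choose (ha (x j))) i := by
      funext j
      show UPUniv.recFun (M := M) S a Fi ((insert ζs (S.u ζs i)).orderEmbOfFin rfl (σ j)) i = _
      rw [hσ j]
    have h2 : (UPUniv.tup (insert ζs (S.u ζs i)) rfl a) ∘ σ = x := by
      funext j
      show a ((insert ζs (S.u ζs i)).orderEmbOfFin rfl (σ j)) = x j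
      rw [hσ j]
      exact Classical.choose_spec (ha (x j))
    have hfinal := hbase σ
    rw [h1, h2] at hfinal
    exact hfinal
  -- build the elementary embedding
  refine ⟨⟨fun x => (↑(fun i => UPUniv.recFun (M := M) S a Fi (Classical.choose (ha x)) i)
      : (D : Filter lam.ord.ToType).Product fun _ => M), ?_⟩⟩
  intro nn φ x
  have hcast := FirstOrder.Language.Ultraproduct.realize_formula_cast (u := D) φ
    (fun j => fun i => UPUniv.recFun (M := M) S a Fi (Classical.choose (ha (x j))) i)
  have hiff := hmain nn φ x
  constructor
  · intro h
    obtain ⟨i, hP, hPQ⟩ := ((hcast.1 h).and hiff).exists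
    exact hPQ.1 hP
  · intro h
    apply hcast.2
    filter_upwards [hiff] with i hi
    exact hi.2 h
end
end

section
/- Let λ be an infinite cardinal. Suppose D is a proper regular filter on λ generated by a family {Z_α : α < λ} of λ sets, and suppose there is a (λ,D)-coherent system (u^ζ_i, n_i). Then for every regular filter D′ on λ there is a (λ,D′)-coherent system: indeed, if {A_α : α < λ} witnesses the regularity of D′ and h : λ → λ is any function with h(i) ∈ ⋂{Z_α : i ∈ A_α} for every i < λ, then the sets v^ζ_i = u^ζ_{h(i)} together with the numbers m_i = n_{h(i)} form a (λ,D′)-coherent system. -/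
open FirstOrder Cardinal Set

noncomputable section

/-- A coherent system for a proper regular filter `D` generated by
`lam` sets transfers to any regular filter `D'` on `lam`, via any `h` with
`h i ∈ ⋂ {Z α : i ∈ A α}`: the sets `v ζ i = u ζ (h i)` and numbers `m i = n (h i)`
form a `(lam,D')`-coherent system. -/
theorem coherent_system_transfer
    (lam : Cardinal.{0}) (hlam : ℵ₀ ≤ lam)
    (D : Filter lam.ord.ToType) (hproper : ∅ ∉ D)
    (Z : lam.ord.ToType → Set lam.ord.ToType)
    (hgen : D = Filter.generate (Set.range Z))
    (hreg : IsRegularFilter lam D)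
    (S : CoherentSystem lam D)
    (D' : Filter lam.ord.ToType)
    (A : lam.ord.ToType → Set lam.ord.ToType)
    (hA : ∀ α, A α ∈ D') (hAfin : ∀ i, {α | i ∈ A α}.Finite)
    (h : lam.ord.ToType → lam.ord.ToType)
    (hh : ∀ i, h i ∈ ⋂ α ∈ {α | i ∈ A α}, Z α) :
    ∃ S' : CoherentSystem lam D',
      S'.u = (fun ζ i => S.u ζ (h i)) ∧ S'.n = (fun i => S.n (h i)) := by
  refine ⟨{ u := fun ζ i => S.u ζ (h i)
            n := fun i => S.n (h i)
            card_lt := fun ζ i => S.card_lt ζ (h i)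
            mem_lt := fun ζ i => S.mem_lt ζ (h i)
            mem_filter := ?_
            coherent := fun ζ i => S.coherent ζ (h i) }, rfl, rfl⟩
  intro B ζ hB
  have hmem : {j | B ⊆ S.u ζ j} ∈ D := S.mem_filter B ζ hB
  have hmem2 : {j | B ⊆ S.u ζ j} ∈ Filter.generate (Set.range Z) := hgen ▸ hmem
  rw [Filter.mem_generate_iff] at hmem2
  obtain ⟨t, hts, htfin, hsub⟩ := hmem2
  have hex : ∀ s : t, ∃ α, Z α = (s : Set _) := fun s => hts s.2
  choose f hf using hex
  haveI : Finite t := htfin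
  have hinter : (⋂ s : t, A (f s)) ∈ D' :=
    (Filter.iInter_mem).2 fun s => hA (f s)
  refine Filter.mem_of_superset hinter ?_
  intro i hi
  have hhi : h i ∈ ⋂₀ t := by
    intro s hs
    have := hf ⟨s, hs⟩
    simp only [Subtype.coe_mk] at this
    rw [← this]
    have hiA : i ∈ A (f ⟨s, hs⟩) := Set.mem_iInter.1 hi ⟨s, hs⟩
    exact Set.mem_iInter₂.1 (hh i) _ hiA
  exact hsub hhi
end
end

section
/- Let λ be an infinite cardinal and fix □^{b*}_λ-data on a λ⁺-like linear order L. For ζ < cf(λ), let Ξ_ζ be the set of E^ζ-equivalence classes, and define for t₁, t₂ ∈ Ξ_ζ: t₁ <_ζ t₂ iff there exist a₁ ∈ t₁ and a₂ ∈ t₂ with a₁ ∈ C^ζ_{a₂}. Then ⟨Ξ_ζ, <_ζ⟩ is a tree order: <_ζ is irreflexive and transitive, and whenever t₁ <_ζ t₃ and t₂ <_ζ t₃, either t₁ <_ζ t₂, or t₂ <_ζ t₁, or t₁ = t₂. -/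
open FirstOrder Cardinal Set

noncomputable section

/-- `□^{b*}_lam`-data on a linear order `L`. -/
structure SquareBStarData (lam : Cardinal.{0}) (L : Type) [LinearOrder L] where
  C : lam.ord.cof.ord.ToType → L → Set L
  E : lam.ord.cof.ord.ToType → L → L → Prop
  f : lam.ord.cof.ord.ToType → L → L → L → L
  E_equiv : ∀ ζ, Equivalence (E ζ)
  C_mono : ∀ ζ ξ, ζ ≤ ξ → ∀ a, C ζ a ⊆ C ξ a
  C_union : ∀ a, ⋃ ζ, C ζ a = {b | b < a}
  C_coh : ∀ ζ a b, b ∈ C ζ a → C ζ b = {c ∈ C ζ a | c < b}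
  E_classes : ∀ ζ, ∃ S : Set L, #S ≤ lam ∧ ∀ a, ∃ b ∈ S, E ζ a b
  E_refines : ∀ ζ ξ, ζ < ξ → ∀ a b, E ξ a b → E ζ a b
  f_bijOn : ∀ ζ a b, E ζ a b → Set.BijOn (f ζ a b) (C ζ a) (C ζ b)
  f_mono : ∀ ζ a b, E ζ a b → ∀ d₁ ∈ C ζ a, ∀ d₂ ∈ C ζ a, d₁ < d₂ → f ζ a b d₁ < f ζ a b d₂
  f_E : ∀ ζ a b, E ζ a b → ∀ d ∈ C ζ a, E ζ d (f ζ a b d)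
  f_coh : ∀ ζ ξ, ζ < ξ → ∀ a b, E ξ a b → ∀ d ∈ C ζ a, f ξ a b d = f ζ a b d
  f_sub : ∀ ζ a b, E ζ a b → ∀ a₁ ∈ C ζ a, ∀ d ∈ C ζ a₁, f ζ a₁ (f ζ a b a₁) d = f ζ a b d
  not_E : ∀ ζ a b, a ∈ C ζ b → ¬ E ζ a b

/-- `L` is a `lam⁺`-like linear order: it has cardinality `lam⁺` and every proper
initial segment has cardinality `≤ lam`. -/
def IsLambdaPlusLike (lam : Cardinal.{0}) (L : Type) [LinearOrder L] : Prop :=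
  #L = Order.succ lam ∧ ∀ a : L, #{b : L // b < a} ≤ lam

/-- Given `□^{b*}_lam`-data on a `lam⁺`-like linear order `L`, the
relation `t₁ <_ζ t₂ ↔ ∃ a₁ ∈ t₁, ∃ a₂ ∈ t₂, a₁ ∈ C^ζ_{a₂}` on the set `Ξ_ζ` of
`E^ζ`-equivalence classes is a tree order: irreflexive, transitive, and any two
predecessors of an element are comparable or equal. -/
theorem xi_tree_order
    (lam : Cardinal.{0}) (hlam : ℵ₀ ≤ lam)
    (L : Type) [LinearOrder L] (hlike : IsLambdaPlusLike lam L)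
    (S : SquareBStarData lam L)
    (ζ : lam.ord.cof.ord.ToType)
    (ltζ : Set L → Set L → Prop)
    (hltζ : ∀ t₁ t₂, ltζ t₁ t₂ ↔ ∃ a₁ ∈ t₁, ∃ a₂ ∈ t₂, a₁ ∈ S.C ζ a₂) :
    (∀ t : Set L, (∃ a, t = {b | S.E ζ a b}) → ¬ ltζ t t) ∧
    (∀ t₁ t₂ t₃ : Set L,
      (∃ a, t₁ = {b | S.E ζ a b}) → (∃ a, t₂ = {b | S.E ζ a b}) →
      (∃ a, t₃ = {b | S.E ζ a b}) →
      ltζ t₁ t₂ → ltζ t₂ t₃ → ltζ t₁ t₃) ∧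
    (∀ t₁ t₂ t₃ : Set L,
      (∃ a, t₁ = {b | S.E ζ a b}) → (∃ a, t₂ = {b | S.E ζ a b}) →
      (∃ a, t₃ = {b | S.E ζ a b}) →
      ltζ t₁ t₃ → ltζ t₂ t₃ → ltζ t₁ t₂ ∨ ltζ t₂ t₁ ∨ t₁ = t₂) := by
  refine ⟨?_, ?_, ?_⟩
  · rintro t ⟨a, rfl⟩ h
    rw [hltζ] at h
    obtain ⟨a₁, h₁, a₂, h₂, hC⟩ := h
    exact S.not_E ζ a₁ a₂ hC
      (((S.E_equiv ζ).trans ((S.E_equiv ζ).symm h₁) h₂))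
  · rintro t₁ t₂ t₃ ⟨x₁, rfl⟩ ⟨x₂, rfl⟩ ⟨x₃, rfl⟩ h12 h23
    rw [hltζ] at h12 h23 ⊢
    obtain ⟨a₁, h₁, a₂, h₂, hC12⟩ := h12
    obtain ⟨b₂, hb₂, a₃, h₃, hC23⟩ := h23
    have hE : S.E ζ a₂ b₂ := (S.E_equiv ζ).trans ((S.E_equiv ζ).symm h₂) hb₂
    have hf : S.f ζ a₂ b₂ a₁ ∈ S.C ζ b₂ := (S.f_bijOn ζ a₂ b₂ hE).mapsTo hC12
    have hsub : S.C ζ b₂ ⊆ S.C ζ a₃ := by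
      rw [S.C_coh ζ a₃ b₂ hC23]; exact fun c hc => hc.1
    refine ⟨S.f ζ a₂ b₂ a₁, ?_, a₃, h₃, hsub hf⟩
    exact (S.E_equiv ζ).trans h₁ (S.f_E ζ a₂ b₂ hE a₁ hC12)
  · rintro t₁ t₂ t₃ ⟨x₁, rfl⟩ ⟨x₂, rfl⟩ ⟨x₃, rfl⟩ h13 h23
    rw [hltζ] at h13 h23
    obtain ⟨a₁, h₁, a₃, h₃, hC13⟩ := h13
    obtain ⟨a₂, h₂, b₃, hb₃, hC23⟩ := h23
    have hE : S.E ζ b₃ a₃ := (S.E_equiv ζ).trans ((S.E_equiv ζ).symm hb₃) h₃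
    set c₂ := S.f ζ b₃ a₃ a₂ with hc₂
    have hc₂C : c₂ ∈ S.C ζ a₃ := (S.f_bijOn ζ b₃ a₃ hE).mapsTo hC23
    have hc₂t : S.E ζ x₂ c₂ :=
      (S.E_equiv ζ).trans h₂ (S.f_E ζ b₃ a₃ hE a₂ hC23)
    rcases lt_trichotomy a₁ c₂ with h | h | h
    · left
      rw [hltζ]
      refine ⟨a₁, h₁, c₂, hc₂t, ?_⟩
      rw [S.C_coh ζ a₃ c₂ hc₂C]
      exact ⟨hC13, h⟩
    · right; right
      have hE12 : S.E ζ x₁ x₂ := by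
        have := hc₂t
        rw [← h] at this
        exact (S.E_equiv ζ).trans h₁ ((S.E_equiv ζ).symm this)
      ext b
      exact ⟨fun hb => (S.E_equiv ζ).trans ((S.E_equiv ζ).symm hE12) hb,
             fun hb => (S.E_equiv ζ).trans hE12 hb⟩
    · right; left
      rw [hltζ]
      refine ⟨c₂, hc₂t, a₁, h₁, ?_⟩
      rw [S.C_coh ζ a₃ a₁ hC13]
      exact ⟨hc₂C, h⟩
end
end

section
/- Let λ be an infinite cardinal and fix □^{b*}_λ-data on a λ⁺-like linear order L. For a <_L b define ξ(a,b) = min{ζ < cf(λ) : a ∈ C^ζ_b}. Then for all a₀ <_L a₁ <_L … <_L aₙ in L (n ≥ 1): max{ξ(a_l, a_m) : 0 ≤ l < m ≤ n} = max{ξ(a_l, a_n) : 0 ≤ l < n}. -/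
open FirstOrder Cardinal Set

noncomputable section

/-- Given `□^{b*}_lam`-data on a `lam⁺`-like linear order `L` and the
function `xi a b = min {ζ : a ∈ C^ζ_b}` (for `a < b`), for every increasing chain
`a 0 < a 1 < … < a n` (with `n ≥ 1`):
`max {xi (a l) (a m) : l < m ≤ n} = max {xi (a l) (a n) : l < n}`. -/
theorem xi_max_eq
    (lam : Cardinal.{0}) (hlam : ℵ₀ ≤ lam)
    (L : Type) [LinearOrder L] (hlike : IsLambdaPlusLike lam L)
    (S : SquareBStarData lam L)
    (xi : L → L → lam.ord.cof.ord.ToType)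
    (hxi : ∀ a b : L, a < b →
      a ∈ S.C (xi a b) b ∧ ∀ ζ, a ∈ S.C ζ b → xi a b ≤ ζ)
    (n : ℕ) (hn : 1 ≤ n) (a : Fin (n + 1) → L) (ha : StrictMono a) :
    (Finset.image (fun p : Fin (n + 1) × Fin (n + 1) => xi (a p.1) (a p.2))
        {p : Fin (n + 1) × Fin (n + 1) | p.1 < p.2}.toFinset).max =
    (Finset.image (fun l : Fin (n + 1) => xi (a l) (a (Fin.last n)))
        {l : Fin (n + 1) | l < Fin.last n}.toFinset).max := by
  apply le_antisymm
  · -- every element of LHS is ≤ RHS max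
    apply Finset.max_le
    intro x hx
    simp only [Finset.mem_image, Set.mem_toFinset, Set.mem_setOf_eq] at hx
    obtain ⟨p, hp, rfl⟩ := hx
    -- key lemma: for a < b < c, xi a b ≤ max (xi a c) (xi b c)
    have key : ∀ u v w : L, u < v → v < w →
        xi u v ≤ max (xi u w) (xi v w) := by
      intro u v w huv hvw
      set ζ := max (xi u w) (xi v w) with hζ
      have hu : u ∈ S.C ζ w := S.C_mono _ _ (le_max_left _ _) w (hxi u w (huv.trans hvw)).1
      have hv : v ∈ S.C ζ w := S.C_mono _ _ (le_max_right _ _) w (hxi v w hvw).1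
      have hC := S.C_coh ζ w v hv
      have : u ∈ S.C ζ v := by rw [hC]; exact ⟨hu, huv⟩
      exact (hxi u v huv).2 ζ this
    rcases eq_or_lt_of_le (Fin.le_last p.2) with h2 | h2
    · -- p.2 = last
      have h1 : p.1 < Fin.last n := h2 ▸ hp
      have : xi (a p.1) (a p.2) ∈ Finset.image
          (fun l : Fin (n + 1) => xi (a l) (a (Fin.last n)))
          {l : Fin (n + 1) | l < Fin.last n}.toFinset := by
        refine Finset.mem_image.2 ⟨p.1, ?_, by rw [h2]⟩
        simpa using h1
      exact Finset.le_max this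
    · -- p.2 < last
      have hkey := key (a p.1) (a p.2) (a (Fin.last n)) (ha hp) (ha h2)
      have m1 : xi (a p.1) (a (Fin.last n)) ∈ Finset.image
          (fun l : Fin (n + 1) => xi (a l) (a (Fin.last n)))
          {l : Fin (n + 1) | l < Fin.last n}.toFinset :=
        Finset.mem_image.2 ⟨p.1, by simpa using hp.trans h2, rfl⟩
      have m2 : xi (a p.2) (a (Fin.last n)) ∈ Finset.image
          (fun l : Fin (n + 1) => xi (a l) (a (Fin.last n)))
          {l : Fin (n + 1) | l < Fin.last n}.toFinset :=
        Finset.mem_image.2 ⟨p.2, by simpa using h2, rfl⟩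
      rcases le_total (xi (a p.1) (a (Fin.last n))) (xi (a p.2) (a (Fin.last n))) with h | h
      · have : xi (a p.1) (a p.2) ≤ xi (a p.2) (a (Fin.last n)) :=
          hkey.trans (sup_le h le_rfl)
        exact le_trans (by exact_mod_cast this) (Finset.le_max m2)
      · have : xi (a p.1) (a p.2) ≤ xi (a p.1) (a (Fin.last n)) :=
          hkey.trans (sup_le le_rfl h)
        exact le_trans (by exact_mod_cast this) (Finset.le_max m1)
  · -- RHS image ⊆ LHS image
    apply Finset.max_mono
    intro x hx
    simp only [Finset.mem_image, Set.mem_toFinset, Set.mem_setOf_eq] at hx ⊢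
    obtain ⟨l, hl, rfl⟩ := hx
    exact ⟨(l, Fin.last n), hl, rfl⟩
end
end

section
/- Let λ be an infinite cardinal and fix □^{b*}_λ-data on a λ⁺-like linear order L, with ξ(a,b) = min{ζ < cf(λ) : a ∈ C^ζ_b} for a <_L b. Let b₀ <_L b₁ <_L … <_L b_{n-1} be elements of L (n ≥ 2) and let ζ = max{ξ(b_l, b_m) : 0 ≤ l < m ≤ n-1}. Then for every a ∈ L there exists at most one k < n such that b_k E^ζ a. -/
open FirstOrder Cardinal Set

noncomputable section

/-- Given `□^{b*}_lam`-data on a `lam⁺`-like linear order `L`, the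
function `xi a b = min {ζ : a ∈ C^ζ_b}` (for `a < b`), an increasing tuple
`b 0 < … < b (n-1)` (with `n ≥ 2`), and `ζ = max {xi (b l) (b m) : l < m}`, for every
`a ∈ L` there is at most one `k < n` with `b k E^ζ a`. -/
theorem at_most_one_equivalent
    (lam : Cardinal.{0}) (hlam : ℵ₀ ≤ lam)
    (L : Type) [LinearOrder L] (hlike : IsLambdaPlusLike lam L)
    (S : SquareBStarData lam L)
    (xi : L → L → lam.ord.cof.ord.ToType)
    (hxi : ∀ a b : L, a < b →
      a ∈ S.C (xi a b) b ∧ ∀ ζ, a ∈ S.C ζ b → xi a b ≤ ζ)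
    (n : ℕ) (hn : 2 ≤ n) (b : Fin n → L) (hb : StrictMono b)
    (ζ : lam.ord.cof.ord.ToType)
    (hζub : ∀ l m : Fin n, l < m → xi (b l) (b m) ≤ ζ)
    (hζmem : ∃ l m : Fin n, l < m ∧ xi (b l) (b m) = ζ) :
    ∀ a : L, ∀ k₁ k₂ : Fin n, S.E ζ (b k₁) a → S.E ζ (b k₂) a → k₁ = k₂ := by
  intro a k₁ k₂ h₁ h₂
  by_contra hne
  wlog hlt : k₁ < k₂ generalizing k₁ k₂
  · exact this k₂ k₁ h₂ h₁ (Ne.symm hne) (lt_of_le_of_ne (not_lt.1 hlt) (Ne.symm hne))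
  have hE : S.E ζ (b k₁) (b k₂) :=
    (S.E_equiv ζ).trans h₁ ((S.E_equiv ζ).symm h₂)
  have hmem : b k₁ ∈ S.C ζ (b k₂) :=
    S.C_mono _ ζ (hζub k₁ k₂ hlt) _ (hxi _ _ (hb hlt)).1
  exact S.not_E ζ _ _ hmem hE
end
end

section
/- Let λ be an uncountable limit cardinal. Suppose D is a proper filter on λ generated by a family of λ sets and there is a (λ,D)-coherent system. Then the principle S_λ holds: there are sets C^i_a ⊆ a (for a < λ⁺ and i < cf(λ)) such that (i) if i ≤ j < cf(λ) then C^i_a ⊆ C^j_a; (ii) ⋃_{i<cf(λ)} C^i_a = a; (iii) if b ∈ C^i_a then C^i_b = C^i_a ∩ b; (iv) for each i < cf(λ), sup{otp(C^i_a) : a < λ⁺} < λ, where otp denotes order type. -/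
open FirstOrder Cardinal Set

noncomputable section

/-- The order type of a subset of a well-ordered type. -/
noncomputable def setOtp {α : Type} [LinearOrder α] [WellFoundedLT α] (s : Set α) : Ordinal.{0} :=
  letI : IsWellOrder α (· < ·) := isWellOrder_lt
  Ordinal.type (Subrel (· < ·) (· ∈ s))

theorem setOtp_card {α : Type} [LinearOrder α] [WellFoundedLT α] (s : Set α) :
    (setOtp s).card = #s := by
  letI : IsWellOrder α (· < ·) := isWellOrder_lt
  exact Ordinal.card_type _

/-- Let `lam` be an uncountable limit cardinal. If a proper filter `D`
on `lam` generated by `lam` sets admits a `(lam,D)`-coherent system, then the principle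
`S_lam` holds: there are sets `C i a ⊆ a` (`a < lam⁺`, `i < cf(lam)`), increasing in
`i`, with union `a`, coherent, and with `sup {otp (C i a) : a < lam⁺} < lam` for each `i`. -/
theorem coherent_system_implies_S_principle
    (lam : Cardinal.{0}) (hlim : Order.IsSuccLimit lam) (hunc : ℵ₀ < lam)
    (D : Filter lam.ord.ToType) (hproper : ∅ ∉ D)
    (hgen : ∃ Z : lam.ord.ToType → Set lam.ord.ToType, D = Filter.generate (Set.range Z))
    (S : CoherentSystem lam D) :
    ∃ C : lam.ord.cof.ord.ToType →
        (Order.succ lam).ord.ToType → Set (Order.succ lam).ord.ToType,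
      (∀ i a, C i a ⊆ {b | b < a}) ∧
      (∀ i j, i ≤ j → ∀ a, C i a ⊆ C j a) ∧
      (∀ a, ⋃ i, C i a = {b | b < a}) ∧
      (∀ i a b, b ∈ C i a → C i b = C i a ∩ {c | c < b}) ∧
      (∀ i, (⨆ a, setOtp (C i a)) < lam.ord) := by
  classical
  obtain ⟨Z, hZ⟩ := hgen
  have hlimo : Order.IsSuccLimit lam.ord := Cardinal.isSuccLimit_ord hunc.le
  -- nonemptiness instances
  haveI hne1 : Nonempty lam.ord.cof.ord.ToType := by
    rw [Ordinal.toType_nonempty_iff_ne_zero]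
    simp only [ne_eq, Cardinal.ord_eq_zero]
    exact fun h => by
      have := Ordinal.aleph0_le_cof.2 hlimo
      rw [h] at this
      exact (Cardinal.aleph0_pos.not_ge this)
  haveI hne0 : Nonempty lam.ord.ToType := by
    rw [Ordinal.toType_nonempty_iff_ne_zero]
    simp only [ne_eq, Cardinal.ord_eq_zero]
    intro h
    exact ((h ▸ hunc).trans_le (zero_le : (0 : Cardinal) ≤ ℵ₀)).false
  haveI hne2 : Nonempty (Order.succ lam).ord.ToType := by
    rw [Ordinal.toType_nonempty_iff_ne_zero]
    simp only [ne_eq, Cardinal.ord_eq_zero]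
    intro h
    exact (h ▸ (lam.zero_le.trans_lt (Order.lt_succ_of_not_isMax (not_isMax lam)))).false
  -- a monotone cofinal map `g` from the cofinality into `lam.ord.ToType`
  obtain ⟨f, hf⟩ := Ordinal.exists_fundamental_sequence lam.ord
  set e := (Ordinal.ToType.mk (o := lam.ord)) with he
  set ec := (Ordinal.ToType.mk (o := lam.ord.cof.ord)) with hec
  set g : lam.ord.cof.ord.ToType → lam.ord.ToType :=
    fun j => e ⟨f (ec.symm j).1 (ec.symm j).2, hf.lt (ec.symm j).2⟩ with hg
  have gmono : ∀ {j j'}, j ≤ j' → g j ≤ g j' := by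
    intro j j' hjj
    apply e.monotone
    change f _ _ ≤ f _ _
    exact hf.monotone _ _ (Subtype.coe_le_coe.2 (ec.symm.monotone hjj))
  have gcof : ∀ α : lam.ord.ToType, ∃ j, α ≤ g j := by
    intro α
    have h1 : (e.symm α).1 < Ordinal.blsub _ f := by
      rw [hf.blsub_eq]; exact (e.symm α).2
    rw [Ordinal.lt_blsub_iff] at h1
    obtain ⟨i, hi, hle⟩ := h1
    refine ⟨ec ⟨i, hi⟩, ?_⟩
    have h2 : ec.symm (ec ⟨i, hi⟩) = ⟨i, hi⟩ := ec.symm_apply_apply _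
    have h3 : g (ec ⟨i, hi⟩) = e ⟨f i hi, hf.lt hi⟩ := by
      simp only [hg, h2]
    rw [h3]
    conv_lhs => rw [← e.apply_symm_apply α]
    exact e.monotone (Subtype.mk_le_mk.2 hle)
  -- the finite intersections of generators
  set I : Finset lam.ord.ToType → Set lam.ord.ToType :=
    fun w => ⋂ α ∈ w, Z α with hI
  have hImem : ∀ w, I w ∈ D := by
    intro w
    rw [hZ]
    exact (Filter.biInter_finset_mem w).2 fun α _ =>
      Filter.mem_generate_of_mem ⟨α, rfl⟩
  have hIne : ∀ w, (I w).Nonempty := by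
    intro w
    rw [Set.nonempty_iff_ne_empty]
    intro h
    exact hproper (h ▸ hImem w)
  have hIanti : ∀ {w w' : Finset lam.ord.ToType}, w ⊆ w' → I w' ⊆ I w := by
    intro w w' hww
    exact Set.biInter_subset_biInter_left hww
  -- the construction
  set C : lam.ord.cof.ord.ToType → (Order.succ lam).ord.ToType →
      Set (Order.succ lam).ord.ToType :=
    fun j a => {γ | γ < a ∧ ∃ w : Finset lam.ord.ToType,
      (∀ α ∈ w, α ≤ g j) ∧ ∀ i ∈ I w, γ ∈ S.u a i} with hC
  refine ⟨C, ?_, ?_, ?_, ?_, ?_⟩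
  · exact fun i a b hb => hb.1
  · rintro i j hij a γ ⟨hγ, w, hw, hwu⟩
    exact ⟨hγ, w, fun α hα => (hw α hα).trans (gmono hij), hwu⟩
  · intro a
    apply Set.Subset.antisymm
    · exact Set.iUnion_subset fun i γ hγ => hγ.1
    · intro γ hγ
      have hm : {i | ({γ} : Finset _) ⊆ S.u a i} ∈ D :=
        S.mem_filter {γ} a (by simpa using hγ)
      have hm' : {i | ({γ} : Finset _) ⊆ S.u a i} ∈ Filter.generate (Set.range Z) := by
        rw [← hZ]; exact hm
      rw [Filter.mem_generate_iff] at hm'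
      obtain ⟨t, hts, htf, hsub⟩ := hm'
      have hch : ∀ x ∈ t, ∃ α, Z α = x := fun x hx => hts hx
      choose! φ hφ using hch
      set w : Finset lam.ord.ToType := htf.toFinset.image φ with hw
      have hIw : ∀ i ∈ I w, γ ∈ S.u a i := by
        intro i hi
        have : i ∈ ⋂₀ t := by
          intro x hx
          have hφx : φ x ∈ w := Finset.mem_image_of_mem φ (htf.mem_toFinset.2 hx)
          have := Set.mem_iInter₂.1 hi (φ x) hφx
          rwa [hφ x hx] at this
        exact Finset.singleton_subset_iff.1 (hsub this)
      set J : lam.ord.ToType → lam.ord.cof.ord.ToType :=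
        fun α => Classical.choose (gcof α) with hJ
      obtain ⟨M, hM⟩ := (w.image J).exists_le
      refine Set.mem_iUnion.2 ⟨M, hγ, w, ?_, hIw⟩
      intro α hα
      exact (Classical.choose_spec (gcof α)).trans
        (gmono (hM (J α) (Finset.mem_image_of_mem J hα)))
  · rintro j a b ⟨hba, wb, hwb, hub⟩
    ext γ
    simp only [hC, Set.mem_inter_iff, Set.mem_setOf_eq]
    constructor
    · rintro ⟨hγb, w', hw', hu'⟩
      refine ⟨⟨hγb.trans hba, wb ∪ w', ?_, ?_⟩, hγb⟩
      · intro α hα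
        rcases Finset.mem_union.1 hα with h | h
        exacts [hwb α h, hw' α h]
      · intro i hi
        have h1 : b ∈ S.u a i := hub i (hIanti Finset.subset_union_left hi)
        have h2 : γ ∈ S.u b i := hu' i (hIanti Finset.subset_union_right hi)
        rw [S.coherent a i b h1, Finset.mem_filter] at h2
        exact h2.1
    · rintro ⟨⟨hγa, w', hw', hu'⟩, hγb⟩
      refine ⟨hγb, wb ∪ w', ?_, ?_⟩
      · intro α hα
        rcases Finset.mem_union.1 hα with h | h
        exacts [hwb α h, hw' α h]
      · intro i hi
        have h1 : b ∈ S.u a i := hub i (hIanti Finset.subset_union_left hi)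
        have h2 : γ ∈ S.u a i := hu' i (hIanti Finset.subset_union_right hi)
        rw [S.coherent a i b h1, Finset.mem_filter]
        exact ⟨h2, hγb⟩
  · intro j
    letI : IsWellOrder lam.ord.ToType (· < ·) := isWellOrder_lt
    set x := g j with hx
    set κ : Cardinal := (Ordinal.typein (α := lam.ord.ToType) (· < ·) x).card with hκ
    set ν : Cardinal := κ + ℵ₀ with hν
    have hνinf : ℵ₀ ≤ ν := le_add_self
    have hνlt : ν < lam := by
      apply Cardinal.add_lt_of_lt hunc.le _ hunc
      rw [hκ, ← Cardinal.lt_ord]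
      exact Ordinal.typein_lt_self x
    have hIiclt : #(Set.Iic x) ≤ ν := by
      have h1 : (Set.Iic x) = insert x (Set.Iio x) := by
        ext y; simp [le_iff_lt_or_eq, or_comm]
      rw [h1]
      refine Cardinal.mk_insert_le.trans ?_
      have h2 : #(Set.Iio x) = κ := by
        rw [hκ]
        rfl
      rw [h2, hν]
      exact add_le_add_right (Cardinal.one_le_aleph0) κ
    -- bound on the cardinality of each `C j a`
    have hcard : ∀ a, #(C j a) ≤ ν := by
      intro a
      set W := {w : Finset lam.ord.ToType | ∀ α ∈ w, α ≤ g j} with hW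
      set i₀ : Finset lam.ord.ToType → lam.ord.ToType :=
        fun w => (hIne w).some with hi₀
      have hcov : C j a ⊆ ⋃ (w : W), (↑(S.u a (i₀ w.1)) : Set _) := by
        rintro γ ⟨hγ, w, hw, hwu⟩
        exact Set.mem_iUnion.2 ⟨⟨w, hw⟩, by
          exact_mod_cast hwu (i₀ w) (hIne w).some_mem⟩
      have h1 : #(C j a) ≤ #W * ℵ₀ := by
        refine (Cardinal.mk_le_mk_of_subset hcov).trans ?_
        refine (Cardinal.mk_iUnion_le _).trans ?_
        apply mul_le_mul' le_rfl
        refine ciSup_le' fun w => ?_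
        exact Cardinal.mk_le_aleph0
      have hWν : #W ≤ ν := by
        -- inject `W` into `Finset (Iic x)`
        set F : W → Finset (Set.Iic x) := fun w =>
          w.1.attach.image fun α => (⟨α.1, w.2 α.1 α.2⟩ : Set.Iic x) with hF
        have hFinj : Function.Injective F := by
          intro w1 w2 hww
          have key : ∀ w : W, (F w).image Subtype.val = w.1 := by
            intro w
            rw [hF]
            simp only [Finset.image_image]
            exact Finset.attach_image_val
          apply Subtype.ext
          rw [← key w1, ← key w2, hww]
        refine (Cardinal.mk_le_of_injective hFinj).trans ?_
        by_cases hfin : Finite (Set.Iic x)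
        · haveI := hfin
          haveI := Fintype.ofFinite (Set.Iic x)
          exact le_trans (Cardinal.lt_aleph0_of_finite _).le le_add_self
        · haveI : Infinite (Set.Iic x) := not_finite_iff_infinite.1 hfin
          rw [Cardinal.mk_finset_of_infinite]
          exact hIiclt
      calc #(C j a) ≤ #W * ℵ₀ := h1
        _ ≤ ν * ν := mul_le_mul' hWν hνinf
        _ = ν := Cardinal.mul_eq_self hνinf
    have hbound : ∀ a, setOtp (C j a) < (Order.succ ν).ord := by
      intro a
      rw [Cardinal.lt_ord, setOtp_card]
      exact (hcard a).trans_lt (Order.lt_succ_of_not_isMax (not_isMax ν))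
    refine lt_of_le_of_lt (ciSup_le fun a => (hbound a).le) ?_
    exact Cardinal.ord_lt_ord.2 (hlim.succ_lt hνlt)
end
end

section
/- Let λ be a limit cardinal written as λ = sup_{α<cf(λ)} λ_α for a strictly increasing sequence ⟨λ_α : α < cf(λ)⟩ of cardinals with λ₀ ≥ ℵ₀. Let D be a proper filter on λ generated by a family {A_β : β < λ}, let (u^ζ_i, n_i) be a (λ,D)-coherent system, and let ⟨Γ_α : α < cf(λ)⟩ be a sequence of subsets of λ such that: (a) |Γ_α| ≤ λ_α; (b) the Γ_α are increasing and continuous in α (at limit stages Γ_α = ⋃_{β<α} Γ_β) with ⋃_α Γ_α = λ; (c) whenever β₁,…,βₙ ∈ Γ_α there is γ ∈ Γ_α with A_γ = A_{β₁} ∩ … ∩ A_{βₙ}. For α < cf(λ) and ζ < λ⁺ define V^α_ζ = {ξ < ζ : ∃γ ∈ Γ_α, A_γ ⊆ {i < λ : ξ ∈ u^ζ_i}}. Then for each ζ < λ⁺: the sequence ⟨V^α_ζ : α < cf(λ)⟩ is increasing and continuous in α (at limit α, V^α_ζ = ⋃_{β<α} V^β_ζ), each V^α_ζ has cardinality ≤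 λ_α, and ⋃_{α<cf(λ)} V^α_ζ = ζ. -/
open FirstOrder Cardinal Set

noncomputable section

/-- For a limit cardinal `lam = sup_{α<cf lam} lam_α`, a proper filter
`D` generated by `{A β : β < lam}` with a `(lam,D)`-coherent system, and a suitable
sequence `Γ`, the sets `V α ζ = {ξ < ζ : ∃ γ ∈ Γ α, A γ ⊆ {i : ξ ∈ u ζ i}}` form, for
each `ζ < lam⁺`, an increasing continuous sequence of sets of cardinality `≤ lam_α`
whose union is `ζ`. -/
theorem V_increasing_continuous_union
    (lam : Cardinal.{0}) (hlim : Order.IsSuccLimit lam)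
    (lamseq : lam.ord.cof.ord.ToType → Cardinal.{0})
    (hmono : StrictMono lamseq)
    (hzero : ∀ α, (∀ β, α ≤ β) → ℵ₀ ≤ lamseq α)
    (hsup : (⨆ α, lamseq α) = lam)
    (D : Filter lam.ord.ToType)
    (A : lam.ord.ToType → Set lam.ord.ToType)
    (hproper : ∅ ∉ D) (hgen : D = Filter.generate (Set.range A))
    (S : CoherentSystem lam D)
    (Γ : lam.ord.cof.ord.ToType → Set lam.ord.ToType)
    (hΓcard : ∀ α, #(Γ α) ≤ lamseq α)
    (hΓmono : ∀ α β, α ≤ β → Γ α ⊆ Γ β)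
    (hΓcont : ∀ α, Order.IsSuccLimit α → Γ α = ⋃ β, ⋃ (_ : β < α), Γ β)
    (hΓunion : ⋃ α, Γ α = Set.univ)
    (hΓinter : ∀ α (s : Finset lam.ord.ToType), ↑s ⊆ Γ α → s.Nonempty →
      ∃ γ ∈ Γ α, A γ = ⋂ β ∈ s, A β)
    (V : lam.ord.cof.ord.ToType →
      (Order.succ lam).ord.ToType → Set (Order.succ lam).ord.ToType)
    (hV : ∀ α ζ, V α ζ = {ξ | ξ < ζ ∧ ∃ γ ∈ Γ α, A γ ⊆ {i | ξ ∈ S.u ζ i}}) :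
    ∀ ζ,
      (∀ α β, α ≤ β → V α ζ ⊆ V β ζ) ∧
      (∀ α, Order.IsSuccLimit α → V α ζ = ⋃ β, ⋃ (_ : β < α), V β ζ) ∧
      (∀ α, #(V α ζ) ≤ lamseq α) ∧
      (⋃ α, V α ζ = {ξ | ξ < ζ}) := by
  classical
  intro ζ
  -- lam is nonzero
  have hlam0 : lam ≠ 0 := by
    intro h
    exact hlim.1 (h ▸ isMin_bot)
  -- the index type is nonempty
  have hord0 : lam.ord ≠ 0 := by
    intro h
    exact hlam0 (by simpa using congrArg Ordinal.card h)
  have hcof0 : lam.ord.cof ≠ 0 := by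
    rw [Ordinal.cof_ne_zero]
    exact hord0
  have hcoford0 : lam.ord.cof.ord ≠ 0 := by
    intro h
    exact hcof0 (by simpa using congrArg Ordinal.card h)
  haveI hne : Nonempty lam.ord.cof.ord.ToType :=
    Ordinal.toType_nonempty_iff_ne_zero.2 hcoford0
  haveI hne2 : Nonempty lam.ord.ToType :=
    Ordinal.toType_nonempty_iff_ne_zero.2 hord0
  -- every lamseq value is infinite
  have hinf : ∀ α, ℵ₀ ≤ lamseq α := by
    intro α
    obtain ⟨b, -, hb⟩ := (IsWellFounded.wf (α := lam.ord.cof.ord.ToType) (r := (· < ·))).has_min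
      Set.univ ⟨α, trivial⟩
    have hble : ∀ β, b ≤ β := fun β => not_lt.1 (fun h => hb β trivial h)
    exact (hzero b hble).trans (hmono.monotone (hble α))
  -- each A γ is in D, hence nonempty
  have hAD : ∀ γ, A γ ∈ D := by
    intro γ
    rw [hgen]
    exact Filter.mem_generate_of_mem ⟨γ, rfl⟩
  have hAne : ∀ γ, (A γ).Nonempty := by
    intro γ
    rcases Set.eq_empty_or_nonempty (A γ) with h | h
    · exact absurd (h ▸ hAD γ) hproper
    · exact h
  refine ⟨?_, ?_, ?_, ?_⟩
  · -- monotone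
    intro α β hab ξ hξ
    rw [hV] at hξ ⊢
    obtain ⟨h1, γ, hγ, h2⟩ := hξ
    exact ⟨h1, γ, hΓmono α β hab hγ, h2⟩
  · -- continuous
    intro α hα
    ext ξ
    simp only [Set.mem_iUnion, hV, Set.mem_setOf_eq]
    constructor
    · rintro ⟨h1, γ, hγ, h2⟩
      rw [hΓcont α hα] at hγ
      simp only [Set.mem_iUnion] at hγ
      obtain ⟨β, hβα, hγβ⟩ := hγ
      exact ⟨β, hβα, h1, γ, hγβ, h2⟩
    · rintro ⟨β, hβα, h1, γ, hγ, h2⟩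
      exact ⟨h1, γ, hΓmono β α hβα.le hγ, h2⟩
  · -- cardinality
    intro α
    have hsub : V α ζ ⊆ ⋃ γ : Γ α, {ξ | A ↑γ ⊆ {i | ξ ∈ S.u ζ i}} := by
      intro ξ hξ
      rw [hV] at hξ
      obtain ⟨-, γ, hγ, h2⟩ := hξ
      exact Set.mem_iUnion.2 ⟨⟨γ, hγ⟩, h2⟩
    have hWfin : ∀ γ : Γ α, {ξ | A ↑γ ⊆ {i | ξ ∈ S.u ζ i}}.Finite := by
      intro γ
      obtain ⟨i₀, hi₀⟩ := hAne ↑γ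
      apply Set.Finite.subset (S.u ζ i₀).finite_toSet
      intro ξ hξ
      exact hξ hi₀
    calc #(V α ζ) ≤ #(⋃ γ : Γ α, {ξ | A ↑γ ⊆ {i | ξ ∈ S.u ζ i}}) := Cardinal.mk_le_mk_of_subset hsub
      _ ≤ #(Γ α) * ⨆ γ : Γ α, #{ξ | A ↑γ ⊆ {i | ξ ∈ S.u ζ i}} := Cardinal.mk_iUnion_le _
      _ ≤ lamseq α * ℵ₀ := by
          apply mul_le_mul' (hΓcard α)
          exact ciSup_le' fun γ => (hWfin γ).lt_aleph0.le
      _ ≤ lamseq α * lamseq α := mul_le_mul' le_rfl (hinf α)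
      _ = lamseq α := Cardinal.mul_eq_self (hinf α)
  · -- union
    ext ξ
    simp only [Set.mem_iUnion, Set.mem_setOf_eq]
    constructor
    · rintro ⟨α, hξ⟩
      rw [hV] at hξ
      exact hξ.1
    · intro hξζ
      have key : {i | ({ξ} : Finset _) ⊆ S.u ζ i} ∈ D :=
        S.mem_filter {ξ} ζ (by simpa using hξζ)
      obtain ⟨t, hts, htfin, hsubt⟩ :=
        Filter.mem_generate_iff.mp (show _ ∈ Filter.generate (Set.range A) by rw [← hgen]; exact key)
      haveI : Fintype t := htfin.fintype
      choose g hg using fun (x : t) => hts x.2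
      set s : Finset lam.ord.ToType := Finset.univ.image g with hs
      have hints : ∀ i, i ∈ ⋂ β ∈ s, A β → i ∈ ⋂₀ t := by
        intro i hi x hx
        have : i ∈ A (g ⟨x, hx⟩) := by
          simp only [Set.mem_iInter] at hi
          exact hi (g ⟨x, hx⟩) (Finset.mem_image.2 ⟨⟨x, hx⟩, Finset.mem_univ _, rfl⟩)
        rwa [hg ⟨x, hx⟩] at this
      rcases s.eq_empty_or_nonempty with hse | hsne
      · -- t is empty: every A γ works
        have htall : ∀ i, i ∈ ⋂₀ t := by
          intro i
          have := hints i (by simp [hse])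
          exact this
        obtain ⟨γ₀⟩ := hne2
        have : γ₀ ∈ ⋃ α, Γ α := hΓunion ▸ Set.mem_univ γ₀
        obtain ⟨α, hα⟩ := Set.mem_iUnion.1 this
        refine ⟨α, ?_⟩
        rw [hV]
        refine ⟨hξζ, γ₀, hα, fun i _ => ?_⟩
        have := hsubt (htall i)
        simpa using this
      · -- pick an index α containing all of s
        choose h hh using fun (β : s) => Set.mem_iUnion.1 (hΓunion ▸ Set.mem_univ (β : lam.ord.ToType))
        have hsne' : (Finset.univ.image h : Finset lam.ord.cof.ord.ToType).Nonempty := by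
          obtain ⟨β, hβ⟩ := hsne
          exact ⟨h ⟨β, hβ⟩, Finset.mem_image.2 ⟨⟨β, hβ⟩, Finset.mem_univ _, rfl⟩⟩
        set αmax := (Finset.univ.image h).max' hsne' with hαmax
        have hsΓ : ↑s ⊆ Γ αmax := by
          intro β hβ
          have hβ' : β ∈ s := hβ
          have hle : h ⟨β, hβ'⟩ ≤ αmax :=
            Finset.le_max' (Finset.univ.image h) (h ⟨β, hβ'⟩)
              (Finset.mem_image_of_mem h (Finset.mem_univ _))
          exact hΓmono _ _ hle (hh ⟨β, hβ'⟩)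
        obtain ⟨γ, hγΓ, hγeq⟩ := hΓinter αmax s hsΓ hsne
        refine ⟨αmax, ?_⟩
        rw [hV]
        refine ⟨hξζ, γ, hγΓ, fun i hi => ?_⟩
        rw [hγeq] at hi
        have := hsubt (hints i hi)
        simpa using this
end
end

section
/- Let λ be a limit cardinal written as λ = sup_{α<cf(λ)} λ_α for a strictly increasing sequence ⟨λ_α : α < cf(λ)⟩ of cardinals with λ₀ ≥ ℵ₀. Let D be a proper filter on λ generated by a family {A_β : β < λ}, let (u^ζ_i, n_i) be a (λ,D)-coherent system, and let ⟨Γ_α : α < cf(λ)⟩ be a sequence of subsets of λ such that: (a) |Γ_α| ≤ λ_α; (b) the Γ_α are increasing and continuous in α with ⋃_α Γ_α = λ; (c) whenever β₁,…,βₙ ∈ Γ_α there is γ ∈ Γ_α with A_γ = A_{β₁} ∩ … ∩ A_{βₙ}. For α < cf(λ) and ζ < λ⁺ define V^α_ζ = {ξ < ζ : ∃γ ∈ Γ_α, A_γ ⊆ {i < λ : ξ ∈ u^ζ_i}}. Then: (1) (coherence) if ξ ∈ V^α_ζ then V^α_ξ = V^α_ζ ∩ ξ; (2) for every α < cf(λ),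 sup{otp(V^α_ζ) : ζ < λ⁺} ≤ λ_α⁺, where otp denotes the order type of a set of ordinals. -/
open FirstOrder Cardinal Set

noncomputable section

set_option maxHeartbeats 1000000 in
/-- In the setting of Statement 9, the sets `V α ζ` are coherent:
`ξ ∈ V α ζ → V α ξ = V α ζ ∩ ξ`, and for every `α < cf(lam)`,
`sup {otp (V α ζ) : ζ < lam⁺} ≤ lam_α⁺`. -/
theorem V_coherent_and_otp_bound
    (lam : Cardinal.{0}) (hlim : Order.IsSuccLimit lam)
    (lamseq : lam.ord.cof.ord.ToType → Cardinal.{0})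
    (hmono : StrictMono lamseq)
    (hzero : ∀ α, (∀ β, α ≤ β) → ℵ₀ ≤ lamseq α)
    (hsup : (⨆ α, lamseq α) = lam)
    (D : Filter lam.ord.ToType)
    (A : lam.ord.ToType → Set lam.ord.ToType)
    (hproper : ∅ ∉ D) (hgen : D = Filter.generate (Set.range A))
    (S : CoherentSystem lam D)
    (Γ : lam.ord.cof.ord.ToType → Set lam.ord.ToType)
    (hΓcard : ∀ α, #(Γ α) ≤ lamseq α)
    (hΓmono : ∀ α β, α ≤ β → Γ α ⊆ Γ β)
    (hΓcont : ∀ α, Order.IsSuccLimit α → Γ α = ⋃ β, ⋃ (_ : β < α), Γ β)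
    (hΓunion : ⋃ α, Γ α = Set.univ)
    (hΓinter : ∀ α (s : Finset lam.ord.ToType), ↑s ⊆ Γ α → s.Nonempty →
      ∃ γ ∈ Γ α, A γ = ⋂ β ∈ s, A β)
    (V : lam.ord.cof.ord.ToType →
      (Order.succ lam).ord.ToType → Set (Order.succ lam).ord.ToType)
    (hV : ∀ α ζ, V α ζ = {ξ | ξ < ζ ∧ ∃ γ ∈ Γ α, A γ ⊆ {i | ξ ∈ S.u ζ i}}) :
    (∀ α ζ ξ, ξ ∈ V α ζ → V α ξ = V α ζ ∩ {x | x < ξ}) ∧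
    (∀ α, (⨆ ζ, setOtp (V α ζ)) ≤ (Order.succ (lamseq α)).ord) := by
  have hA : ∀ γ, A γ ∈ D := fun γ => by
    rw [hgen]; exact Filter.mem_generate_of_mem ⟨γ, rfl⟩
  have hAne : ∀ γ, (A γ).Nonempty := by
    intro γ
    rcases Set.eq_empty_or_nonempty (A γ) with h | h
    · exact absurd (h ▸ hA γ) hproper
    · exact h
  constructor
  · intro α ζ ξ hξ
    rw [hV] at hξ
    obtain ⟨hξζ, γ₂, hγ₂Γ, hγ₂⟩ := hξ
    ext x
    simp only [hV, Set.mem_setOf_eq, Set.mem_inter_iff]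
    constructor
    · rintro ⟨hxξ, γ₁, hγ₁Γ, hγ₁⟩
      refine ⟨⟨hxξ.trans hξζ, ?_⟩, hxξ⟩
      obtain ⟨γ, hγΓ, hγ⟩ := hΓinter α {γ₁, γ₂}
        (by intro y hy; simp only [Finset.coe_insert, Finset.coe_singleton,
              Set.mem_insert_iff, Set.mem_singleton_iff] at hy
            rcases hy with rfl | rfl; exacts [hγ₁Γ, hγ₂Γ])
        ⟨γ₁, by simp⟩
      refine ⟨γ, hγΓ, fun i hi => ?_⟩
      rw [hγ] at hi
      simp only [Finset.mem_insert, Finset.mem_singleton, Set.mem_iInter] at hi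
      have h1 : x ∈ S.u ξ i := hγ₁ (hi γ₁ (Or.inl rfl))
      have h2 : ξ ∈ S.u ζ i := hγ₂ (hi γ₂ (Or.inr rfl))
      have := S.coherent ζ i ξ h2
      rw [this, Finset.mem_filter] at h1
      exact h1.1
    · rintro ⟨⟨hxζ, γ₁, hγ₁Γ, hγ₁⟩, hxξ⟩
      refine ⟨hxξ, ?_⟩
      obtain ⟨γ, hγΓ, hγ⟩ := hΓinter α {γ₁, γ₂}
        (by intro y hy; simp only [Finset.coe_insert, Finset.coe_singleton,
              Set.mem_insert_iff, Set.mem_singleton_iff] at hy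
            rcases hy with rfl | rfl; exacts [hγ₁Γ, hγ₂Γ])
        ⟨γ₁, by simp⟩
      refine ⟨γ, hγΓ, fun i hi => ?_⟩
      rw [hγ] at hi
      simp only [Finset.mem_insert, Finset.mem_singleton, Set.mem_iInter] at hi
      have h1 : x ∈ S.u ζ i := hγ₁ (hi γ₁ (Or.inl rfl))
      have h2 : ξ ∈ S.u ζ i := hγ₂ (hi γ₂ (Or.inr rfl))
      show x ∈ S.u ξ i
      rw [S.coherent ζ i ξ h2, Finset.mem_filter]
      exact ⟨h1, hxξ⟩
  · intro α
    -- lamseq α is infinite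
    have hne : Nonempty lam.ord.cof.ord.ToType := by
      rw [Ordinal.toType_nonempty_iff_ne_zero]
      intro h
      rw [Cardinal.ord_eq_zero] at h
      rw [Ordinal.cof_eq_zero, Cardinal.ord_eq_zero] at h
      exact hlim.1 (h ▸ isMin_bot)
    obtain ⟨x⟩ := hne
    set α₀ := (IsWellFounded.wf (α := lam.ord.cof.ord.ToType) (r := (· < ·))).min Set.univ ⟨x, trivial⟩ with hα₀def
    have hα₀ : ∀ b, α₀ ≤ b := fun b =>
      not_lt.1 ((IsWellFounded.wf (α := lam.ord.cof.ord.ToType) (r := (· < ·))).not_lt_min Set.univ (x := b) trivial)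
    have hinf : ℵ₀ ≤ lamseq α := le_trans (hzero α₀ hα₀) (hmono.monotone (hα₀ α))
    refine ciSup_le' fun ζ => ?_
    have hcard : #(V α ζ) ≤ lamseq α := by
      obtain ⟨f, hf⟩ : ∃ f : Γ α → lam.ord.ToType, ∀ γ : Γ α, f γ ∈ A ↑γ :=
        ⟨fun γ => (hAne ↑γ).some, fun γ => (hAne ↑γ).some_mem⟩
      set W : Γ α → Set (Order.succ lam).ord.ToType := fun γ => ↑(S.u ζ (f γ)) with hW
      have hsub : V α ζ ⊆ ⋃ γ : Γ α, W γ := by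
        intro ξ hξ
        rw [hV] at hξ
        obtain ⟨-, γ, hγΓ, hγ⟩ := hξ
        exact Set.mem_iUnion.2 ⟨⟨γ, hγΓ⟩, hγ (hf ⟨γ, hγΓ⟩)⟩
      have hWfin : ∀ γ : Γ α, #(W γ) ≤ ℵ₀ := fun γ => ((S.u ζ (f γ)).finite_toSet.lt_aleph0).le
      calc #(V α ζ) ≤ #(⋃ γ : Γ α, W γ) := Cardinal.mk_le_mk_of_subset hsub
        _ ≤ #(Γ α) * ⨆ γ : Γ α, #(W γ) := Cardinal.mk_iUnion_le W
        _ ≤ lamseq α * ℵ₀ := mul_le_mul' (hΓcard α) (ciSup_le' hWfin)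
        _ ≤ lamseq α * lamseq α := mul_le_mul' le_rfl hinf
        _ = lamseq α := Cardinal.mul_eq_self hinf
    have : setOtp (V α ζ) < (Order.succ (lamseq α)).ord := by
      rw [Cardinal.lt_ord]
      have hc : (setOtp (V α ζ)).card = #(V α ζ) := by
        simp [setOtp, Ordinal.card_type]
      rw [hc]
      exact lt_of_le_of_lt hcard (Order.lt_succ_of_not_isMax (not_isMax _))
    exact this.le
end
end

section
/- Let λ be an infinite cardinal with 2^λ = λ⁺, and let D be a regular ultrafilter on λ that admits a (λ,D)-coherent system. Let 𝓛 be a relational language of cardinality ≤ λ and, for each i < λ, let M_i and N_i be nonempty elementarily equivalent 𝓛-structures of cardinality ≤ λ⁺. Then the ultraproducts ∏_{i<λ} M_i / D and ∏_{i<λ} N_i / D (each equipped with the induced 𝓛-structure as in Łoś's theorem) are isomorphic as 𝓛-structures. -/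
open FirstOrder Cardinal Set

noncomputable section


namespace KeislerAux

open FirstOrder.Language

variable {L : FirstOrder.Language.{0,0}}

open scoped Classical

namespace BoundedFormula

/-- Conjunction of the formulas `f b` for `b ∈ s`. -/
def iInf {α β : Type*} {n : ℕ} (s : Finset β) (f : β → L.BoundedFormula α n) :
    L.BoundedFormula α n :=
  (s.toList.map f).foldr (· ⊓ ·) ⊤

/-- Disjunction of the formulas `f b` for `b ∈ s`. -/
def iSup {α β : Type*} {n : ℕ} (s : Finset β) (f : β → L.BoundedFormula α n) :
    L.BoundedFormula α n :=
  (s.toList.map f).foldr (· ⊔ ·) ⊥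

theorem realize_iInf {α β : Type*} {n : ℕ} {M : Type*} [L.Structure M] {s : Finset β}
    {f : β → L.BoundedFormula α n} {v : α → M} {xs : Fin n → M} :
    (iInf s f).Realize v xs ↔ ∀ b ∈ s, (f b).Realize v xs := by
  simp [iInf, FirstOrder.Language.BoundedFormula.realize_foldr_inf]

theorem realize_iSup {α β : Type*} {n : ℕ} {M : Type*} [L.Structure M] {s : Finset β}
    {f : β → L.BoundedFormula α n} {v : α → M} {xs : Fin n → M} :
    (iSup s f).Realize v xs ↔ ∃ b ∈ s, (f b).Realize v xs := by
  simp [iSup, FirstOrder.Language.BoundedFormula.realize_foldr_sup]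

end BoundedFormula

/-- Quantifier rank of a bounded formula. -/
def qr : ∀ {α : Type} {n : ℕ}, L.BoundedFormula α n → ℕ
  | _, _, .falsum => 0
  | _, _, .equal _ _ => 0
  | _, _, .rel _ _ => 0
  | _, _, .imp f g => max (qr f) (qr g)
  | _, _, .all f => qr f + 1

/-- The formula only uses relation symbols from `S`. -/
def usesOnly (S : Set (Σ n, L.Relations n)) :
    ∀ {α : Type} {n : ℕ}, L.BoundedFormula α n → Prop
  | _, _, .falsum => True
  | _, _, .equal _ _ => True
  | _, _, @FirstOrder.Language.BoundedFormula.rel _ _ _ m R _ => (⟨m, R⟩ : Σ n, L.Relations n) ∈ S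
  | _, _, .imp f g => usesOnly S f ∧ usesOnly S g
  | _, _, .all f => usesOnly S f

theorem usesOnly_mono {S S' : Set (Σ n, L.Relations n)} (h : S ⊆ S')
    {α : Type} {n : ℕ} (φ : L.BoundedFormula α n) (hφ : usesOnly S φ) : usesOnly S' φ := by
  induction φ with
  | falsum => simp only [usesOnly]
  | equal => simp only [usesOnly]
  | rel R ts => simp only [usesOnly] at hφ ⊢; exact h hφ
  | imp f g ihf ihg =>
      simp only [usesOnly] at hφ ⊢; exact ⟨ihf hφ.1, ihg hφ.2⟩
  | all f ih => simp only [usesOnly] at hφ ⊢; exact ih hφ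

/-- Atomic formulas over symbols in `S` with `k` (bounded) variables. -/
def atoms (S : Finset (Σ n, L.Relations n)) (k : ℕ) : Finset (L.BoundedFormula Empty k) :=
  ((Finset.univ : Finset (Fin k × Fin k)).image fun p =>
      BoundedFormula.equal (Term.var (Sum.inr p.1)) (Term.var (Sum.inr p.2))) ∪
    S.biUnion fun R =>
      (Finset.univ : Finset (Fin R.1 → Fin k)).image fun v =>
        BoundedFormula.rel R.2 fun j => Term.var (Sum.inr (v j))

theorem equal_mem_atoms (S : Finset (Σ n, L.Relations n)) {k : ℕ} (p q : Fin k) :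
    BoundedFormula.equal (L := L) (Term.var (Sum.inr p)) (Term.var (Sum.inr q)) ∈ atoms S k := by
  rw [atoms]
  exact Finset.mem_union_left _ (Finset.mem_image.2 ⟨(p, q), Finset.mem_univ _, rfl⟩)

theorem rel_mem_atoms {S : Finset (Σ n, L.Relations n)} {k n : ℕ} {R : L.Relations n}
    (hR : (⟨n, R⟩ : Σ n, L.Relations n) ∈ S) (v : Fin n → Fin k) :
    BoundedFormula.rel R (fun j => Term.var (Sum.inr (v j))) ∈ atoms S k := by
  rw [atoms]
  exact Finset.mem_union_right _
    (Finset.mem_biUnion.2 ⟨⟨n, R⟩, hR, Finset.mem_image.2 ⟨v, Finset.mem_univ _, rfl⟩⟩)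

variable (S : Finset (Σ n, L.Relations n))

/-- The rank-0 "Hintikka formula" (atomic diagram) of a tuple. -/
def hint0 (M : Type) [L.Structure M] {k : ℕ} (as : Fin k → M) : L.BoundedFormula Empty k :=
  BoundedFormula.iInf (atoms S k) fun φ =>
    if φ.Realize (default : Empty → M) as then φ else φ.not

/-- Finite sets of formulas containing all rank-`r` Hintikka formulas. -/
def Fs : ℕ → (k : ℕ) → Finset (L.BoundedFormula Empty k)
  | 0, k => (atoms S k).powerset.image fun t =>
      BoundedFormula.iInf (atoms S k) fun φ => if φ ∈ t then φ else φ.not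
  | r + 1, k => ((atoms S k).powerset ×ˢ (Fs (r + 0) (k + 1)).powerset).image fun p =>
      (BoundedFormula.iInf (atoms S k) fun φ => if φ ∈ p.1 then φ else φ.not) ⊓
        (BoundedFormula.iInf p.2 BoundedFormula.ex ⊓ (BoundedFormula.iSup p.2 id).all)

/-- The rank-`r` Hintikka formula of a tuple. -/
def hint (M : Type) [L.Structure M] : (r : ℕ) → {k : ℕ} → (Fin k → M) → L.BoundedFormula Empty k
  | 0, _, as => hint0 S M as
  | r + 1, k, as =>
    hint0 S M as ⊓
      (BoundedFormula.iInf
          ((Fs S r (k + 1)).filter fun φ => ∃ a : M, hint M r (Fin.snoc as a) = φ)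
          BoundedFormula.ex ⊓
        (BoundedFormula.iSup
          ((Fs S r (k + 1)).filter fun φ => ∃ a : M, hint M r (Fin.snoc as a) = φ) id).all)

theorem iInf_congr {β : Type*} {n : ℕ} {s : Finset β} {f g : β → L.BoundedFormula Empty n}
    (h : ∀ b ∈ s, f b = g b) : BoundedFormula.iInf s f = BoundedFormula.iInf s g := by
  unfold BoundedFormula.iInf
  congr 1
  exact List.map_congr_left fun b hb => h b (Finset.mem_toList.1 hb)

theorem hint_mem (M : Type) [L.Structure M] (r : ℕ) {k : ℕ} (as : Fin k → M) :
    hint S M r as ∈ Fs S r k := by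
  induction r with
  | zero =>
    rw [hint, Fs]
    refine Finset.mem_image.2 ⟨(atoms S k).filter fun φ => φ.Realize (default : Empty → M) as,
      Finset.mem_powerset.2 (Finset.filter_subset _ _), ?_⟩
    rw [hint0]
    exact (iInf_congr fun φ hφ => by
      by_cases hr : φ.Realize (default : Empty → M) as <;>
        simp [hr, Finset.mem_filter, hφ]).symm
  | succ r ih =>
    rw [hint, Fs]
    refine Finset.mem_image.2 ⟨((atoms S k).filter fun φ => φ.Realize (default : Empty → M) as,
      (Fs S r (k + 1)).filter fun φ => ∃ a : M, hint S M r (Fin.snoc as a) = φ),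
      Finset.mem_product.2 ⟨Finset.mem_powerset.2 (Finset.filter_subset _ _),
        Finset.mem_powerset.2 (Finset.filter_subset _ _)⟩, ?_⟩
    congr 1
    rw [hint0]
    exact (iInf_congr fun φ hφ => by
      by_cases hr : φ.Realize (default : Empty → M) as <;>
        simp [hr, Finset.mem_filter, hφ]).symm

theorem realize_hint0_self (M : Type) [L.Structure M] {k : ℕ} (as : Fin k → M) :
    (hint0 S M as).Realize (default : Empty → M) as := by
  rw [hint0, BoundedFormula.realize_iInf]
  intro φ _
  by_cases hr : φ.Realize (default : Empty → M) as <;> simp [hr]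

theorem realize_hint_self (M : Type) [L.Structure M] (r : ℕ) {k : ℕ} (as : Fin k → M) :
    (hint S M r as).Realize (default : Empty → M) as := by
  induction r generalizing k with
  | zero => rw [hint]; exact realize_hint0_self S M as
  | succ r ih =>
    rw [hint, BoundedFormula.realize_inf, BoundedFormula.realize_inf]
    refine ⟨realize_hint0_self S M as, ?_, ?_⟩
    · rw [BoundedFormula.realize_iInf]
      intro φ hφ
      obtain ⟨-, a, rfl⟩ := Finset.mem_filter.1 hφ
      exact BoundedFormula.realize_ex.2 ⟨a, ih _⟩
    · rw [BoundedFormula.realize_all]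
      intro a
      rw [BoundedFormula.realize_iSup]
      exact ⟨hint S M r (Fin.snoc as a),
        Finset.mem_filter.2 ⟨hint_mem S M r _, a, rfl⟩, ih _⟩

theorem hint_atomic {M N : Type} [L.Structure M] [L.Structure N] {r k : ℕ} {as : Fin k → M}
    {bs : Fin k → N} (h : (hint S M r as).Realize (default : Empty → N) bs) :
    ∀ φ ∈ atoms S k,
      (φ.Realize (default : Empty → M) as ↔ φ.Realize (default : Empty → N) bs) := by
  have h0 : (hint0 S M as).Realize (default : Empty → N) bs := by
    cases r with
    | zero => rw [hint] at h; exact h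
    | succ r => rw [hint, BoundedFormula.realize_inf] at h; exact h.1
  intro φ hφ
  rw [hint0, BoundedFormula.realize_iInf] at h0
  have h1 := h0 φ hφ
  by_cases hr : φ.Realize (default : Empty → M) as
  · rw [if_pos hr] at h1; exact iff_of_true hr h1
  · rw [if_neg hr, BoundedFormula.realize_not] at h1; exact iff_of_false hr h1

theorem hint_step {M N : Type} [L.Structure M] [L.Structure N] {r k : ℕ} {as : Fin k → M}
    {bs : Fin k → N} (h : (hint S M (r + 1) as).Realize (default : Empty → N) bs) :
    (∀ a : M, ∃ b : N,
        (hint S M r (Fin.snoc as a)).Realize (default : Empty → N) (Fin.snoc bs b)) ∧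
      ∀ b : N, ∃ a : M,
        (hint S M r (Fin.snoc as a)).Realize (default : Empty → N) (Fin.snoc bs b) := by
  rw [hint, BoundedFormula.realize_inf, BoundedFormula.realize_inf] at h
  obtain ⟨-, hex, hall⟩ := h
  constructor
  · intro a
    rw [BoundedFormula.realize_iInf] at hex
    have h2 := hex (hint S M r (Fin.snoc as a)) (Finset.mem_filter.2 ⟨hint_mem S M r _, a, rfl⟩)
    rw [BoundedFormula.realize_ex] at h2
    exact h2
  · intro b
    rw [BoundedFormula.realize_all] at hall
    have h2 := hall b
    rw [BoundedFormula.realize_iSup] at h2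
    obtain ⟨φ, hφ, hreal⟩ := h2
    obtain ⟨-, a, rfl⟩ := Finset.mem_filter.1 hφ
    exact ⟨a, hreal⟩

theorem term_eq_var [L.IsRelational] {α : Type*} (t : L.Term α) : ∃ x, t = Term.var x := by
  cases t with
  | var x => exact ⟨x, rfl⟩
  | func f ts => exact isEmptyElim f

theorem hint_transfer [L.IsRelational] {M N : Type} [L.Structure M] [L.Structure N]
    {k : ℕ} (φ : L.BoundedFormula Empty k) :
    ∀ {r : ℕ} (as : Fin k → M) (bs : Fin k → N), qr φ ≤ r → usesOnly (↑S) φ →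
      (hint S M r as).Realize (default : Empty → N) bs →
      (φ.Realize (default : Empty → M) as ↔ φ.Realize (default : Empty → N) bs) := by
  induction φ with
  | falsum => exact fun _ _ _ _ _ => Iff.rfl
  | @equal n t₁ t₂ =>
    intro r as bs _ _ hh
    obtain ⟨x₁, rfl⟩ := term_eq_var t₁
    obtain ⟨x₂, rfl⟩ := term_eq_var t₂
    cases x₁ with
    | inl e => exact isEmptyElim e
    | inr p =>
      cases x₂ with
      | inl e => exact isEmptyElim e
      | inr q => exact hint_atomic S hh _ (equal_mem_atoms S p q)
  | @rel n m R ts =>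
    intro r as bs _ huses hh
    have hv : ∀ j, ∃ p : Fin n, ts j = Term.var (Sum.inr p) := by
      intro j
      obtain ⟨x, hx⟩ := term_eq_var (ts j)
      cases x with
      | inl e => exact isEmptyElim e
      | inr p => exact ⟨p, hx⟩
    choose v hv using hv
    rw [funext hv]
    refine hint_atomic S hh _ (rel_mem_atoms ?_ v)
    simpa only [usesOnly, Finset.mem_coe] using huses
  | imp f g ihf ihg =>
    intro r as bs hqr huses hh
    simp only [qr] at hqr
    simp only [usesOnly] at huses
    simp only [BoundedFormula.realize_imp]
    exact imp_congr (ihf as bs (le_trans (le_max_left _ _) hqr) huses.1 hh)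
      (ihg as bs (le_trans (le_max_right _ _) hqr) huses.2 hh)
  | all ψ ih =>
    intro r as bs hqr huses hh
    simp only [qr] at hqr
    simp only [usesOnly] at huses
    obtain ⟨r, rfl⟩ : ∃ r', r = r' + 1 := ⟨r - 1, by omega⟩
    simp only [BoundedFormula.realize_all]
    constructor
    · intro hM b
      obtain ⟨a, ha⟩ := (hint_step S hh).2 b
      exact (ih (Fin.snoc as a) (Fin.snoc bs b) (by omega) huses ha).1 (hM a)
    · intro hN a
      obtain ⟨b, hb⟩ := (hint_step S hh).1 a
      exact (ih (Fin.snoc as a) (Fin.snoc bs b) (by omega) huses hb).2 (hN b)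

theorem hint_cast {M N : Type} [L.Structure M] [L.Structure N] {r k k' : ℕ} (e : k' = k)
    (as : Fin k → M) (bs : Fin k → N) :
    (hint S M r as).Realize (default : Empty → N) bs ↔
      (hint S M r (as ∘ Fin.cast e)).Realize (default : Empty → N) (bs ∘ Fin.cast e) := by
  subst e
  simp only [Fin.cast_refl, Function.comp_id]

/-- Elementarily equivalent structures satisfy each other's Hintikka sentences. -/
theorem hint_of_equiv {M N : Type} [L.Structure M] [L.Structure N] (h : M ≅[L] N) (r : ℕ)
    (as : Fin 0 → M) (bs : Fin 0 → N) :
    (hint S M r as).Realize (default : Empty → N) bs := by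
  have hM : (hint S M r as).Realize (default : Empty → M) (default : Fin 0 → M) := by
    rw [Subsingleton.elim (default : Fin 0 → M) as]
    exact realize_hint_self S M r as
  have hN : N ⊨ (hint S M r as : L.Sentence) :=
    (elementarilyEquivalent_iff.1 h _).1 hM
  rw [Subsingleton.elim bs (default : Fin 0 → N)]
  exact hN

theorem sort_insert_max {α : Type*} [LinearOrder α] {s : Finset α} {b : α}
    (hb : ∀ x ∈ s, x < b) : (insert b s).sort (· ≤ ·) = s.sort (· ≤ ·) ++ [b] := by
  classical
  have hbs : b ∉ s := fun h => lt_irrefl b (hb b h)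
  apply List.Perm.eq_of_pairwise' (Finset.pairwise_sort _ _) ?_ ?_
  swap
  · have p1 : List.Perm ((insert b s).sort (· ≤ ·)) ((insert b s).toList) :=
      Finset.sort_perm_toList _ _
    have p2 : List.Perm ((insert b s).toList) (b :: s.toList) := Finset.toList_insert hbs
    have p3 : List.Perm (b :: s.toList) (b :: s.sort (· ≤ ·)) :=
      List.Perm.cons b (Finset.sort_perm_toList _ _).symm
    have p4 : List.Perm (b :: s.sort (· ≤ ·)) (s.sort (· ≤ ·) ++ [b]) := by
      simpa using List.perm_append_comm (l₁ := [b]) (l₂ := s.sort (· ≤ ·))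
    exact ((p1.trans p2).trans p3).trans p4
  · refine List.pairwise_append.mpr ⟨Finset.pairwise_sort _ _, List.pairwise_singleton _ _, ?_⟩
    intro x hx y hy
    rw [List.mem_singleton] at hy
    subst hy
    exact le_of_lt (hb x ((Finset.mem_sort _).1 hx))

section Construction

variable {lam : Cardinal.{0}} {D : Filter lam.ord.ToType}
  (S : CoherentSystem lam D)
  {L : FirstOrder.Language.{0,0}}
  {M N : lam.ord.ToType → Type}
  [∀ i, L.Structure (M i)] [∀ i, L.Structure (N i)]
  [∀ i, Nonempty (M i)] [∀ i, Nonempty (N i)]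
  (SS : lam.ord.ToType → Finset (Σ n, L.Relations n))
  (e : (Order.succ lam).ord.ToType → ((∀ i, M i) ⊕ (∀ i, N i)))

/-- The sorted list of the coherent finite set `u ζ i`. -/
def lst (ζ : (Order.succ lam).ord.ToType) (i : lam.ord.ToType) :
    List (Order.succ lam).ord.ToType :=
  (S.u ζ i).sort (· ≤ ·)

theorem lst_get_lt (ζ : (Order.succ lam).ord.ToType) (i : lam.ord.ToType)
    (j : Fin (lst S ζ i).length) : (lst S ζ i).get j < ζ := by
  apply S.mem_lt ζ i
  have h1 : (lst S ζ i).get j ∈ lst S ζ i := by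
    simpa using List.get_mem _ _ j.isLt
  unfold lst at h1
  exact (Finset.mem_sort _).1 h1

/-- The main back-and-forth sequence, defined by transfinite recursion. -/
def seq : (Order.succ lam).ord.ToType → (∀ i, M i) × (∀ i, N i) :=
  (IsWellFounded.wf (r := ((· < ·) : (Order.succ lam).ord.ToType → _ → Prop))).fix
    fun ζ rec =>
      match e ζ with
      | .inl f =>
        (f, fun i => Classical.epsilon fun b =>
          (hint (SS i) (M i) (S.n i - (S.u ζ i).card - 1)
            (Fin.snoc (fun j => (rec ((lst S ζ i).get j) (lst_get_lt S ζ i j)).1 i) (f i))).Realize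
            (default : Empty → N i)
            (Fin.snoc (fun j => (rec ((lst S ζ i).get j) (lst_get_lt S ζ i j)).2 i) b))
      | .inr h =>
        (fun i => Classical.epsilon fun a =>
          (hint (SS i) (M i) (S.n i - (S.u ζ i).card - 1)
            (Fin.snoc (fun j => (rec ((lst S ζ i).get j) (lst_get_lt S ζ i j)).1 i) a)).Realize
            (default : Empty → N i)
            (Fin.snoc (fun j => (rec ((lst S ζ i).get j) (lst_get_lt S ζ i j)).2 i) (h i)), h)

/-- The `M`-side tuple indexed by `u ζ i`. -/
def gt (ζ : (Order.succ lam).ord.ToType) (i : lam.ord.ToType) :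
    Fin (lst S ζ i).length → M i :=
  fun j => (seq S SS e ((lst S ζ i).get j)).1 i

/-- The `N`-side tuple indexed by `u ζ i`. -/
def ht (ζ : (Order.succ lam).ord.ToType) (i : lam.ord.ToType) :
    Fin (lst S ζ i).length → N i :=
  fun j => (seq S SS e ((lst S ζ i).get j)).2 i

theorem seq_def (ζ : (Order.succ lam).ord.ToType) :
    seq S SS e ζ =
      match e ζ with
      | .inl f =>
        (f, fun i => Classical.epsilon fun b =>
          (hint (SS i) (M i) (S.n i - (S.u ζ i).card - 1)
            (Fin.snoc (gt S SS e ζ i) (f i))).Realize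
            (default : Empty → N i) (Fin.snoc (ht S SS e ζ i) b))
      | .inr h =>
        (fun i => Classical.epsilon fun a =>
          (hint (SS i) (M i) (S.n i - (S.u ζ i).card - 1)
            (Fin.snoc (gt S SS e ζ i) a)).Realize
            (default : Empty → N i) (Fin.snoc (ht S SS e ζ i) (h i)), h) := by
  rw [seq, WellFounded.fix_eq]
  rfl

theorem seq_inv (hequiv : ∀ i, M i ≅[L] N i) (ζ : (Order.succ lam).ord.ToType)
    (i : lam.ord.ToType) :
    (hint (SS i) (M i) (S.n i - (S.u ζ i).card - 1)
      (Fin.snoc (gt S SS e ζ i) ((seq S SS e ζ).1 i))).Realize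
      (default : Empty → N i) (Fin.snoc (ht S SS e ζ i) ((seq S SS e ζ).2 i)) := by
  induction ζ using WellFoundedLT.induction with
  | _ ζ IH => ?_
  have pre : (hint (SS i) (M i) (S.n i - (S.u ζ i).card)
      (gt S SS e ζ i)).Realize (default : Empty → N i) (ht S SS e ζ i) := by
    rcases Finset.eq_empty_or_nonempty (S.u ζ i) with hemp | hne
    · have hlen : (0 : ℕ) = (lst S ζ i).length := by
        rw [lst, hemp]
        simp
      exact (hint_cast (SS i) hlen (gt S SS e ζ i) (ht S SS e ζ i)).2
        (hint_of_equiv (SS i) (hequiv i) _ _ _)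
    · set β := (S.u ζ i).max' hne with hβdef
      have hβu : β ∈ S.u ζ i := Finset.max'_mem _ hne
      have hβζ : β < ζ := S.mem_lt ζ i β hβu
      have hcoh := S.coherent ζ i β hβu
      have hblt : ∀ x ∈ S.u β i, x < β := by
        intro x hx
        rw [hcoh] at hx
        exact (Finset.mem_filter.1 hx).2
      have hβnot : β ∉ S.u β i := fun h => lt_irrefl β (hblt β h)
      have hins : S.u ζ i = insert β (S.u β i) := by
        ext x
        simp only [Finset.mem_insert, hcoh, Finset.mem_filter]
        constructor
        · intro hx
          rcases eq_or_ne x β with hxe | hxe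
          · exact Or.inl hxe
          · exact Or.inr ⟨hx, lt_of_le_of_ne (Finset.le_max' _ _ hx) hxe⟩
        · rintro (rfl | ⟨hx, -⟩)
          · exact hβu
          · exact hx
      have hsort : lst S ζ i = lst S β i ++ [β] := by
        rw [lst, lst, hins, sort_insert_max hblt]
      have hlen : (lst S β i).length + 1 = (lst S ζ i).length := by
        rw [hsort]
        simp
      have hcard : (S.u ζ i).card = (S.u β i).card + 1 := by
        rw [hins, Finset.card_insert_of_notMem hβnot]
      have hrank : S.n i - (S.u β i).card - 1 = S.n i - (S.u ζ i).card := by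
        rw [hcard]
        omega
      have hgetlast : (lst S ζ i).get (Fin.cast hlen (Fin.last _)) = β := by
        simp [hsort, List.getElem_concat_length]
      have hgetcast : ∀ j : Fin (lst S β i).length,
          (lst S ζ i).get (Fin.cast hlen j.castSucc) = (lst S β i).get j := by
        intro j
        simp only [hsort, List.get_eq_getElem]
        rw [List.getElem_append_left] <;> simp
      have htupM : gt S SS e ζ i ∘ Fin.cast hlen
          = Fin.snoc (gt S SS e β i) ((seq S SS e β).1 i) := by
        funext j
        refine Fin.lastCases ?_ ?_ j
        · show gt S SS e ζ i (Fin.cast hlen (Fin.last _)) = _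
          rw [Fin.snoc_last, gt, hgetlast]
        · intro j
          show gt S SS e ζ i (Fin.cast hlen j.castSucc) = _
          rw [Fin.snoc_castSucc, gt, gt, hgetcast]
      have htupN : ht S SS e ζ i ∘ Fin.cast hlen
          = Fin.snoc (ht S SS e β i) ((seq S SS e β).2 i) := by
        funext j
        refine Fin.lastCases ?_ ?_ j
        · show ht S SS e ζ i (Fin.cast hlen (Fin.last _)) = _
          rw [Fin.snoc_last, ht, hgetlast]
        · intro j
          show ht S SS e ζ i (Fin.cast hlen j.castSucc) = _
          rw [Fin.snoc_castSucc, ht, ht, hgetcast]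
      rw [← hrank]
      refine (hint_cast (SS i) hlen (gt S SS e ζ i) (ht S SS e ζ i)).2 ?_
      rw [htupM, htupN]
      exact IH β hβζ
  have hpos : S.n i - (S.u ζ i).card = (S.n i - (S.u ζ i).card - 1) + 1 := by
    have := S.card_lt ζ i
    omega
  rw [hpos] at pre
  rcases he : e ζ with f | h
  · rw [seq_def S SS e ζ, he]
    exact Classical.epsilon_spec ((hint_step _ pre).1 (f i))
  · rw [seq_def S SS e ζ, he]
    exact Classical.epsilon_spec ((hint_step _ pre).2 (h i))

theorem exists_pos (ζ : (Order.succ lam).ord.ToType) (i : lam.ord.ToType)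
    (β : (Order.succ lam).ord.ToType) (hβ : β = ζ ∨ β ∈ S.u ζ i) :
    ∃ p : Fin ((lst S ζ i).length + 1),
      (Fin.snoc (gt S SS e ζ i) ((seq S SS e ζ).1 i) : Fin _ → M i) p = (seq S SS e β).1 i ∧
        (Fin.snoc (ht S SS e ζ i) ((seq S SS e ζ).2 i) : Fin _ → N i) p = (seq S SS e β).2 i := by
  rcases hβ with rfl | hβ
  · exact ⟨Fin.last _, by simp, by simp⟩
  · have hmem : β ∈ lst S ζ i := by
      rw [lst]
      exact (Finset.mem_sort _).2 hβ
    obtain ⟨j, hj⟩ := List.mem_iff_get.1 hmem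
    refine ⟨j.castSucc, ?_, ?_⟩
    · rw [Fin.snoc_castSucc, gt, hj]
    · rw [Fin.snoc_castSucc, ht, hj]

theorem seq_eq_transfer (hequiv : ∀ i, M i ≅[L] N i) (β γ : (Order.succ lam).ord.ToType) :
    {i | ((seq S SS e β).1 i = (seq S SS e γ).1 i ↔
      (seq S SS e β).2 i = (seq S SS e γ).2 i)} ∈ D := by
  classical
  set ζ := max β γ with hζ
  have hβζ : β ≤ ζ := le_max_left _ _
  have hγζ : γ ≤ ζ := le_max_right _ _
  have hX : {i | (({β, γ} : Finset _).erase ζ : Finset _) ⊆ S.u ζ i} ∈ D := by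
    apply S.mem_filter
    intro b hb
    obtain ⟨hbne, hbmem⟩ := Finset.mem_erase.1 hb
    rcases Finset.mem_insert.1 hbmem with rfl | hbmem
    · exact lt_of_le_of_ne hβζ hbne
    · rw [Finset.mem_singleton] at hbmem
      subst hbmem
      exact lt_of_le_of_ne hγζ hbne
  refine Filter.mem_of_superset hX ?_
  intro i hi
  have hβ' : β = ζ ∨ β ∈ S.u ζ i := by
    rcases eq_or_ne β ζ with hb | hb
    · exact Or.inl hb
    · exact Or.inr (hi (Finset.mem_erase.2 ⟨hb, Finset.mem_insert_self _ _⟩))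
  have hγ' : γ = ζ ∨ γ ∈ S.u ζ i := by
    rcases eq_or_ne γ ζ with hb | hb
    · exact Or.inl hb
    · exact Or.inr (hi (Finset.mem_erase.2 ⟨hb,
        Finset.mem_insert.2 (Or.inr (Finset.mem_singleton_self _))⟩))
  obtain ⟨p, hp1, hp2⟩ := exists_pos S SS e ζ i β hβ'
  obtain ⟨q, hq1, hq2⟩ := exists_pos S SS e ζ i γ hγ'
  have hatom := hint_atomic (SS i) (seq_inv S SS e hequiv ζ i) _
    (equal_mem_atoms (SS i) p q)
  simp only [BoundedFormula.Realize, Term.realize] at hatom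
  show _ ↔ _
  rw [← hp1, ← hp2, ← hq1, ← hq2]
  exact hatom

theorem seq_rel_transfer (hT : Nonempty (Order.succ lam).ord.ToType)
    (hequiv : ∀ i, M i ≅[L] N i)
    (hSS : ∀ R : Σ n, L.Relations n, {i | R ∈ SS i} ∈ D) {n : ℕ} (R : L.Relations n)
    (bb : Fin n → (Order.succ lam).ord.ToType) :
    {i | (Structure.RelMap R (fun j => (seq S SS e (bb j)).1 i) ↔
      Structure.RelMap R fun j => (seq S SS e (bb j)).2 i)} ∈ D := by
  classical
  obtain ⟨ζ, hζ⟩ : ∃ ζ, ∀ j, bb j ≤ ζ := by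
    rcases isEmpty_or_nonempty (Fin n) with h | h
    · exact ⟨Classical.arbitrary _, fun j => isEmptyElim j⟩
    · have hBne : (Finset.univ.image bb).Nonempty := by
        obtain ⟨j⟩ := h
        exact ⟨bb j, Finset.mem_image.2 ⟨j, Finset.mem_univ _, rfl⟩⟩
      exact ⟨(Finset.univ.image bb).max' hBne, fun j =>
        Finset.le_max' _ _ (Finset.mem_image.2 ⟨j, Finset.mem_univ _, rfl⟩)⟩
  have hX1 : {i | ((Finset.univ.image bb).erase ζ : Finset _) ⊆ S.u ζ i} ∈ D := by
    apply S.mem_filter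
    intro b hb
    obtain ⟨hbne, hbmem⟩ := Finset.mem_erase.1 hb
    obtain ⟨j, -, rfl⟩ := Finset.mem_image.1 hbmem
    exact lt_of_le_of_ne (hζ j) hbne
  refine Filter.mem_of_superset (Filter.inter_mem hX1 (hSS ⟨n, R⟩)) ?_
  rintro i ⟨hi1, hi2⟩
  have hb' : ∀ j, bb j = ζ ∨ bb j ∈ S.u ζ i := by
    intro j
    rcases eq_or_ne (bb j) ζ with hb | hb
    · exact Or.inl hb
    · exact Or.inr (hi1 (Finset.mem_erase.2 ⟨hb,
        Finset.mem_image.2 ⟨j, Finset.mem_univ _, rfl⟩⟩))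
  choose ρ hρ1 hρ2 using fun j => exists_pos S SS e ζ i (bb j) (hb' j)
  have hatom := hint_atomic (SS i) (seq_inv S SS e hequiv ζ i) _
    (rel_mem_atoms (hi2 : _ ∈ SS i) ρ)
  simp only [BoundedFormula.realize_rel, BoundedFormula.Realize, Term.realize] at hatom
  show _ ↔ _
  rw [← funext hρ1, ← funext hρ2]
  exact hatom

theorem seq_fst (ζ : (Order.succ lam).ord.ToType) {f : ∀ i, M i} (h : e ζ = Sum.inl f) :
    (seq S SS e ζ).1 = f := by
  rw [seq_def S SS e ζ, h]

theorem seq_snd (ζ : (Order.succ lam).ord.ToType) {f : ∀ i, N i} (h : e ζ = Sum.inr f) :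
    (seq S SS e ζ).2 = f := by
  rw [seq_def S SS e ζ, h]

end Construction

end KeislerAux

open KeislerAux FirstOrder.Language in
/-- Assume `2 ^ lam = lam⁺` and let `D` be a regular ultrafilter on
`lam` admitting a `(lam,D)`-coherent system. If `L` is a relational language of
cardinality `≤ lam` and `M i ≅[L] N i` are nonempty structures of cardinality `≤ lam⁺`
for all `i < lam`, then `∏ M i / D ≅ ∏ N i / D` as `L`-structures. -/
theorem ultraproducts_isomorphic
    (lam : Cardinal.{0}) (hlam : ℵ₀ ≤ lam)
    (hch : (2 : Cardinal.{0}) ^ lam = Order.succ lam)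
    (D : Ultrafilter lam.ord.ToType)
    (hreg : IsRegularFilter lam (D : Filter lam.ord.ToType))
    (S : CoherentSystem lam (D : Filter lam.ord.ToType))
    (L : FirstOrder.Language.{0,0}) [L.IsRelational] (hL : L.card ≤ lam)
    (M N : lam.ord.ToType → Type)
    [∀ i, L.Structure (M i)] [∀ i, L.Structure (N i)]
    [∀ i, Nonempty (M i)] [∀ i, Nonempty (N i)]
    (hMcard : ∀ i, #(M i) ≤ Order.succ lam) (hNcard : ∀ i, #(N i) ≤ Order.succ lam)
    (hequiv : ∀ i, M i ≅[L] N i) :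
    Nonempty (((D : Filter lam.ord.ToType).Product M) ≃[L]
      ((D : Filter lam.ord.ToType).Product N)) := by
  classical
  have hTne : Nonempty (Order.succ lam).ord.ToType := by
    rw [Ordinal.nonempty_toType_iff, ne_eq, Cardinal.ord_eq_zero]
    intro h0
    have h1 : lam < Order.succ lam := Order.lt_succ lam
    rw [h0] at h1
    exact absurd h1 (not_lt.2 (zero_le : (0 : Cardinal) ≤ lam))
  have hI : #(lam.ord.ToType) = lam := Cardinal.mk_ord_toType lam
  have hT : #((Order.succ lam).ord.ToType) = Order.succ lam :=
    Cardinal.mk_ord_toType (Order.succ lam)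
  -- Step 1: finite sublanguages `SS i` via regularity
  obtain ⟨A, hA, hAfin⟩ := hreg
  have hcardO : #(Option (Σ n, L.Relations n)) ≤ #(lam.ord.ToType) := by
    rw [hI, Cardinal.mk_option]
    calc #(Σ n, L.Relations n) + 1 ≤ lam + 1 := by
          refine add_le_add_left ?_ 1
          refine le_trans ?_ hL
          exact ⟨⟨Sum.inr, fun a b hab => Sum.inr.inj hab⟩⟩
      _ ≤ lam + lam := add_le_add_right (Cardinal.one_le_iff_ne_zero.2 (by
          rintro rfl
          exact absurd hlam (by simp [Cardinal.aleph0_ne_zero]))) lam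
      _ = lam := Cardinal.add_eq_self hlam
  obtain ⟨emb⟩ := (Cardinal.le_def _ _).1 hcardO
  set σ : lam.ord.ToType → Option (Σ n, L.Relations n) := Function.invFun emb with hσdef
  have hσ : Function.Surjective σ := Function.invFun_surjective emb.injective
  have hfinS : ∀ i, {R : Σ n, L.Relations n | ∃ α, i ∈ A α ∧ σ α = some R}.Finite := by
    intro i
    refine Set.Finite.subset (Set.Finite.preimage (Option.some_injective _).injOn
      ((hAfin i).image σ)) ?_
    rintro R ⟨α, hα, hσα⟩
    exact ⟨α, hα, hσα⟩
  set SS : lam.ord.ToType → Finset (Σ n, L.Relations n) := fun i => (hfinS i).toFinset with hSSdef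
  have hSS : ∀ R : Σ n, L.Relations n, {i | R ∈ SS i} ∈ (D : Filter lam.ord.ToType) := by
    intro R
    obtain ⟨α₀, hα₀⟩ := hσ (some R)
    refine Filter.mem_of_superset (hA α₀) ?_
    intro i hi
    show R ∈ SS i
    rw [hSSdef, Set.Finite.mem_toFinset]
    exact ⟨α₀, hi, hα₀⟩
  -- Step 2: an enumeration of both products
  have hprod : ∀ (P : lam.ord.ToType → Type), (∀ i, #(P i) ≤ Order.succ lam) →
      #(∀ i, P i) ≤ Order.succ lam := by
    intro P hP
    rw [Cardinal.mk_pi]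
    calc Cardinal.prod (fun i => #(P i)) ≤ Cardinal.prod (fun _ => Order.succ lam) :=
          Cardinal.prod_le_prod _ _ hP
      _ = (Order.succ lam) ^ #(lam.ord.ToType) := Cardinal.prod_const' _ _
      _ = ((2 : Cardinal) ^ lam) ^ lam := by rw [hI, hch]
      _ = (2 : Cardinal) ^ (lam * lam) := (Cardinal.power_mul).symm
      _ = (2 : Cardinal) ^ lam := by rw [Cardinal.mul_eq_self hlam]
      _ = Order.succ lam := hch
  have hMN : #((∀ i, M i) ⊕ (∀ i, N i)) ≤ #((Order.succ lam).ord.ToType) := by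
    rw [hT, Cardinal.mk_sum]
    simp only [Cardinal.lift_id]
    calc #(∀ i, M i) + #(∀ i, N i) ≤ Order.succ lam + Order.succ lam :=
          add_le_add (hprod M hMcard) (hprod N hNcard)
      _ = Order.succ lam := Cardinal.add_eq_self (hlam.trans (Order.le_succ lam))
  haveI : Nonempty ((∀ i, M i) ⊕ (∀ i, N i)) := ⟨Sum.inl fun i => Classical.arbitrary _⟩
  obtain ⟨emb2⟩ := (Cardinal.le_def _ _).1 hMN
  set e : (Order.succ lam).ord.ToType → ((∀ i, M i) ⊕ (∀ i, N i)) := Function.invFun emb2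
    with hedef
  have he : Function.Surjective e := Function.invFun_surjective emb2.injective
  -- Step 3: the back-and-forth sequence
  set sq := KeislerAux.seq S SS e with hsqdef
  have hcM : ∀ f : (∀ i, M i), ∃ ζ, e ζ = Sum.inl f := fun f => he (Sum.inl f)
  have hcN : ∀ f : (∀ i, N i), ∃ ζ, e ζ = Sum.inr f := fun f => he (Sum.inr f)
  set cM : (∀ i, M i) → (Order.succ lam).ord.ToType := fun f => (hcM f).choose with hcMdef
  set cN : (∀ i, N i) → (Order.succ lam).ord.ToType := fun f => (hcN f).choose with hcNdef
  have hcM1 : ∀ f, (sq (cM f)).1 = f := fun f => seq_fst S SS e _ (hcM f).choose_spec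
  have hcN2 : ∀ f, (sq (cN f)).2 = f := fun f => seq_snd S SS e _ (hcN f).choose_spec
  have keyEq : ∀ β γ, ({i | (sq β).1 i = (sq γ).1 i} ∈ (D : Filter lam.ord.ToType) ↔
      {i | (sq β).2 i = (sq γ).2 i} ∈ (D : Filter lam.ord.ToType)) := by
    intro β γ
    have hiff := seq_eq_transfer S SS e hequiv β γ
    constructor
    · intro h1
      refine Filter.mem_of_superset (Filter.inter_mem h1 hiff) ?_
      rintro i ⟨h2, h3⟩
      exact h3.1 h2
    · intro h1
      refine Filter.mem_of_superset (Filter.inter_mem h1 hiff) ?_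
      rintro i ⟨h2, h3⟩
      exact h3.2 h2
  have keyRel : ∀ (n : ℕ) (R : L.Relations n) (bb : Fin n → (Order.succ lam).ord.ToType),
      ({i | Structure.RelMap R (fun j => (sq (bb j)).1 i)} ∈ (D : Filter lam.ord.ToType) ↔
        {i | Structure.RelMap R (fun j => (sq (bb j)).2 i)} ∈ (D : Filter lam.ord.ToType)) := by
    intro n R bb
    have hiff := seq_rel_transfer S SS e hTne hequiv hSS R bb
    constructor
    · intro h1
      refine Filter.mem_of_superset (Filter.inter_mem h1 hiff) ?_
      rintro i ⟨h2, h3⟩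
      exact h3.1 h2
    · intro h1
      refine Filter.mem_of_superset (Filter.inter_mem h1 hiff) ?_
      rintro i ⟨h2, h3⟩
      exact h3.2 h2
  -- Step 4: the maps between the ultraproducts
  letI sd := (D : Filter lam.ord.ToType).productSetoid M
  letI sd' := (D : Filter lam.ord.ToType).productSetoid N
  have hΦsound' : ∀ f f' : (∀ i, M i), {i | f i = f' i} ∈ (D : Filter lam.ord.ToType) →
      {i | (sq (cM f)).2 i = (sq (cM f')).2 i} ∈ (D : Filter lam.ord.ToType) := by
    intro f f' hff
    refine (keyEq (cM f) (cM f')).1 ?_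
    rw [hcM1, hcM1]
    exact hff
  have hΨsound' : ∀ f f' : (∀ i, N i), {i | f i = f' i} ∈ (D : Filter lam.ord.ToType) →
      {i | (sq (cN f)).1 i = (sq (cN f')).1 i} ∈ (D : Filter lam.ord.ToType) := by
    intro f f' hff
    refine (keyEq (cN f) (cN f')).2 ?_
    rw [hcN2, hcN2]
    exact hff
  have hΦsound : ∀ f f' : (∀ i, M i), f ≈ f' → (sq (cM f)).2 ≈ (sq (cM f')).2 :=
    fun f f' h => hΦsound' f f' h
  have hΨsound : ∀ f f' : (∀ i, N i), f ≈ f' → (sq (cN f)).1 ≈ (sq (cN f')).1 :=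
    fun f f' h => hΨsound' f f' h
  let Φ : (D : Filter lam.ord.ToType).Product M → (D : Filter lam.ord.ToType).Product N :=
    Quotient.map (fun f => (sq (cM f)).2) hΦsound
  let Ψ : (D : Filter lam.ord.ToType).Product N → (D : Filter lam.ord.ToType).Product M :=
    Quotient.map (fun f => (sq (cN f)).1) hΨsound
  have hleft : Function.LeftInverse Ψ Φ := by
    intro q
    refine Quotient.inductionOn q ?_
    intro f
    show Quotient.map _ hΨsound (Quotient.map _ hΦsound ⟦f⟧) = ⟦f⟧
    rw [Quotient.map_mk, Quotient.map_mk]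
    refine Quotient.sound (?_ : {i | _ = _} ∈ (D : Filter lam.ord.ToType))
    have h2 : {i | (sq (cN ((sq (cM f)).2))).2 i = (sq (cM f)).2 i} ∈
        (D : Filter lam.ord.ToType) := by
      rw [hcN2]
      exact Filter.univ_mem' fun i => rfl
    have h1 := (keyEq (cN ((sq (cM f)).2)) (cM f)).2 h2
    rw [hcM1] at h1
    exact h1
  have hright : Function.RightInverse Ψ Φ := by
    intro q
    refine Quotient.inductionOn q ?_
    intro f
    show Quotient.map _ hΦsound (Quotient.map _ hΨsound ⟦f⟧) = ⟦f⟧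
    rw [Quotient.map_mk, Quotient.map_mk]
    refine Quotient.sound (?_ : {i | _ = _} ∈ (D : Filter lam.ord.ToType))
    have h2 : {i | (sq (cM ((sq (cN f)).1))).1 i = (sq (cN f)).1 i} ∈
        (D : Filter lam.ord.ToType) := by
      rw [hcM1]
      exact Filter.univ_mem' fun i => rfl
    have h1 := (keyEq (cM ((sq (cN f)).1)) (cN f)).1 h2
    rw [hcN2] at h1
    exact h1
  refine ⟨⟨⟨Φ, Ψ, hleft, hright⟩, ?_, ?_⟩⟩
  · intro n f
    exact isEmptyElim f
  · intro n R x
    -- reduce to representatives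
    have hx : ∀ j, x j = ⟦(x j).out⟧ := fun j => (Quotient.out_eq (x j)).symm
    have hx' : x = fun j => (⟦(x j).out⟧ : (D : Filter lam.ord.ToType).Product M) := by
      funext j
      exact hx j
    rw [hx']
    have hΦx : (fun j => Φ (⟦(x j).out⟧ : (D : Filter lam.ord.ToType).Product M)) =
        fun j => (⟦(sq (cM ((x j).out))).2⟧ : (D : Filter lam.ord.ToType).Product N) := by
      funext j
      exact Quotient.map_mk _ hΦsound _
    show Structure.RelMap R (fun j => Φ (⟦(x j).out⟧ :
      (D : Filter lam.ord.ToType).Product M)) ↔ _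
    rw [hΦx]
    erw [Language.relMap_quotient_mk', Language.relMap_quotient_mk']
    show (∀ᶠ i in (D : Filter lam.ord.ToType),
        Structure.RelMap R fun j => (sq (cM ((x j).out))).2 i) ↔
      ∀ᶠ i in (D : Filter lam.ord.ToType), Structure.RelMap R fun j => ((x j).out) i
    have h1 := keyRel n R (fun j => cM ((x j).out))
    have h2 : ∀ j, (sq (cM ((x j).out))).1 = (x j).out := fun j => hcM1 _
    constructor
    · intro hh
      have h3 := h1.2 hh
      refine Filter.mem_of_superset h3 ?_
      intro i hi
      show Structure.RelMap R fun j => ((x j).out) i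
      have : (fun j => ((x j).out) i) = fun j => (sq (cM ((x j).out))).1 i := by
        funext j
        rw [h2 j]
      rw [this]
      exact hi
    · intro hh
      refine h1.1 ?_
      refine Filter.mem_of_superset hh ?_
      intro i hi
      show Structure.RelMap R fun j => (sq (cM ((x j).out))).1 i
      have : (fun j => (sq (cM ((x j).out))).1 i) = fun j => ((x j).out) i := by
        funext j
        rw [h2 j]
      rw [this]
      exact hi
end
end

section
/- Let 𝓛 be a relational language, let γ be an infinite ordinal, and let M and N be nonempty 𝓛-structures each of cardinality at most the cardinality of γ. If player II has a winning strategy in the Ehrenfeucht–Fraïssé game EF_γ(M, N), then M and N are isomorphic as 𝓛-structures. -/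
open FirstOrder Cardinal Set

noncomputable section

/-- `σ` is a winning strategy for player II in the Ehrenfeucht–Fraïssé game of length `γ`
on `A` and `B`: given any position `⟨(a_β, b_β) : β < α⟩` and a move of player I
(an element of `A ⊕ B`), `σ` returns a pair whose corresponding coordinate equals
I's move, and along every play in which II follows `σ`, the resulting relation
`{(a_β, b_β) : β < γ}` is a partial isomorphism from `A` to `B`. -/
def IsWinningStrategyII (L : FirstOrder.Language.{0,0}) (A B : Type*)
    [L.Structure A] [L.Structure B] (γ : Ordinal.{0})
    (σ : (α : γ.ToType) → ((β : γ.ToType) → β < α → A × B) → A ⊕ B → A × B) : Prop :=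
  (∀ α pos a, (σ α pos (Sum.inl a)).1 = a) ∧
  (∀ α pos b, (σ α pos (Sum.inr b)).2 = b) ∧
  (∀ p : γ.ToType → A × B,
    (∀ α, ∃ m : A ⊕ B, p α = σ α (fun β _ => p β) m) →
    (∀ β β', (p β).1 = (p β').1 ↔ (p β).2 = (p β').2) ∧
    (∀ (k : ℕ) (R : L.Relations k) (v : Fin k → γ.ToType),
      Language.Structure.RelMap R (fun j => (p (v j)).1) ↔
        Language.Structure.RelMap R (fun j => (p (v j)).2)))

/-- The play produced by following strategy `σ` against the sequence of moves `e`. -/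
noncomputable def playAux {A B : Type*} {γ : Ordinal.{0}}
    (σ : (α : γ.ToType) → ((β : γ.ToType) → β < α → A × B) → A ⊕ B → A × B)
    (e : γ.ToType → A ⊕ B) : γ.ToType → A × B :=
  (IsWellFounded.wf (r := ((· < ·) : γ.ToType → γ.ToType → Prop))).fix
    (fun α ih => σ α (fun β h => ih β h) (e α))

theorem playAux_eq {A B : Type*} {γ : Ordinal.{0}}
    (σ : (α : γ.ToType) → ((β : γ.ToType) → β < α → A × B) → A ⊕ B → A × B)
    (e : γ.ToType → A ⊕ B) (α : γ.ToType) :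
    playAux σ e α = σ α (fun β _ => playAux σ e β) (e α) := by
  rw [playAux, WellFounded.fix_eq]

/-- If `L` is a relational language, `γ` an infinite ordinal, and
`M`, `N` nonempty `L`-structures of cardinality at most `|γ|`, then a winning strategy
for player II in the Ehrenfeucht–Fraïssé game of length `γ` on `M` and `N` yields an
isomorphism `M ≅ N`. -/
theorem iso_of_winning_strategy
    (L : FirstOrder.Language.{0,0}) [L.IsRelational]
    (γ : Ordinal.{0}) (hγ : Ordinal.omega0 ≤ γ)
    (M N : Type) [L.Structure M] [L.Structure N] [Nonempty M] [Nonempty N]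
    (hMcard : #M ≤ γ.card) (hNcard : #N ≤ γ.card)
    (hwin : ∃ σ, IsWinningStrategyII L M N γ σ) :
    Nonempty (M ≃[L] N) := by
  obtain ⟨σ, h1, h2, h3⟩ := hwin
  -- a surjective enumeration of all possible moves
  have hcard : #(M ⊕ N) ≤ #γ.ToType := by
    rw [Cardinal.mk_toType, Cardinal.mk_sum]
    simp only [Cardinal.lift_id]
    have hinf : ℵ₀ ≤ γ.card := by rwa [Ordinal.aleph0_le_card]
    calc #M + #N ≤ γ.card + γ.card := add_le_add hMcard hNcard
      _ = γ.card := by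
          rw [Cardinal.add_eq_self hinf]
  obtain ⟨f⟩ := hcard
  set e : γ.ToType → M ⊕ N := Function.invFun f with he_def
  have he : Function.Surjective e :=
    Function.LeftInverse.surjective (Function.leftInverse_invFun f.injective)
  set p : γ.ToType → M × N := playAux σ e with hp_def
  have hplay : ∀ α, ∃ m : M ⊕ N, p α = σ α (fun β _ => p β) m := fun α =>
    ⟨e α, playAux_eq σ e α⟩
  obtain ⟨key1, key2⟩ := h3 p hplay
  -- forward and backward maps
  let ia : M → γ.ToType := fun a => Function.surjInv he (Sum.inl a)
  let ib : N → γ.ToType := fun b => Function.surjInv he (Sum.inr b)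
  have hia : ∀ a, (p (ia a)).1 = a := by
    intro a
    rw [hp_def, playAux_eq, Function.surjInv_eq he (Sum.inl a)]
    exact h1 _ _ a
  have hib : ∀ b, (p (ib b)).2 = b := by
    intro b
    rw [hp_def, playAux_eq, Function.surjInv_eq he (Sum.inr b)]
    exact h2 _ _ b
  let F : M → N := fun a => (p (ia a)).2
  let G : N → M := fun b => (p (ib b)).1
  have hGF : ∀ a, G (F a) = a := by
    intro a
    have : (p (ib (F a))).2 = (p (ia a)).2 := by rw [hib]
    have := (key1 (ib (F a)) (ia a)).mpr this
    simpa [G, hia a] using this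
  have hFG : ∀ b, F (G b) = b := by
    intro b
    have : (p (ia (G b))).1 = (p (ib b)).1 := by rw [hia]
    have := (key1 (ia (G b)) (ib b)).mp this
    simpa [F, hib b] using this
  refine ⟨⟨⟨F, G, hGF, hFG⟩, ?_, ?_⟩⟩
  · intro n f; exact isEmptyElim f
  · intro n r x
    have := key2 n r (fun j => ia (x j))
    simp only [hia] at this
    exact Iff.symm (by simpa [Function.comp_def, F] using this)
end
end
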